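/- arXiv:2202.03921 — 12 statements merged into one kernel-verified Lean document; each statement's English description precedes it below -/
import Mathlib

section
/- Let α ∈ Sₙ and let H be a subset of the underlying n-element set with α(H) ⊆ H. Then α(H) = H. Moreover, if d ≥ 1 is an integer such that for every x ∈ H the length of the α-cycle through x is divisible by d, then the cardinality |H| belongs to the d-range F_d(α). -/
/-- `cycleCount α j` is the number of cycles of length `j` of `α ∈ Sₙ`, counting each
fixed point as a cycle of length `1`. -/
def cycleCount {n : ℕ} (α : Equiv.Perm (Fin n)) (j : ℕ) : ℕ :=
  if j = 1 then n - α.support.card else α.cycleType.count j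

/-- The `d`-range `F_d(α)`: all sums `∑_j q_j · j` with `0 ≤ q_j ≤ g_j` and `q_j = 0`
whenever `d ∤ j`, where `g_j = cycleCount α j`. -/
def dRange {n : ℕ} (α : Equiv.Perm (Fin n)) (d : ℕ) : Set ℕ :=
  { m | ∃ q : ℕ → ℕ, (∀ j, q j ≤ cycleCount α j) ∧ (∀ j, ¬ d ∣ j → q j = 0) ∧
      m = ∑ j ∈ Finset.range (n + 1), q j * j }

/-- The length of the `α`-cycle through a point `x`: `1` if `x` is fixed, and the
cardinality of the support of `α.cycleOf x` otherwise. -/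
def cycleLengthAt {n : ℕ} (α : Equiv.Perm (Fin n)) (x : Fin n) : ℕ :=
  if α x = x then 1 else (α.cycleOf x).support.card

/-- if `α(H) ⊆ H` then `α(H) = H`; moreover if `d ≥ 1` divides the length
of the `α`-cycle through every point of `H`, then `|H| ∈ F_d(α)`. -/
theorem stmt_1 (n : ℕ) (α : Equiv.Perm (Fin n)) (H : Finset (Fin n))
    (hH : H.image α ⊆ H) :
    H.image α = H ∧
    ∀ d : ℕ, 1 ≤ d → (∀ x ∈ H, d ∣ cycleLengthAt α x) → H.card ∈ dRange α d := by
  classical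
  have himg : H.image α = H :=
    Finset.eq_of_subset_of_card_le hH
      (by rw [Finset.card_image_of_injective _ α.injective])
  refine ⟨himg, ?_⟩
  intro d hd hdiv
  have hinv : ∀ x ∈ H, α x ∈ H := fun x hx => hH (Finset.mem_image_of_mem α hx)
  have hpow : ∀ (k : ℕ), ∀ x ∈ H, (α ^ k) x ∈ H := by
    intro k
    induction k with
    | zero => exact fun x hx => by simpa using hx
    | succ k ih =>
      intro x hx
      rw [pow_succ, Equiv.Perm.mul_apply]
      exact ih _ (hinv x hx)
  have hcyc : ∀ x ∈ H, (α.cycleOf x).support ⊆ H := by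
    intro x hx y hy
    obtain ⟨i, _, rfl⟩ :=
      (Equiv.Perm.mem_support_cycleOf_iff.mp hy).1.exists_pow_eq'
    exact hpow i x hx
  set Hf := H.filter (fun x => α x = x) with hHfdef
  set T := α.cycleFactorsFinset.filter (fun c => c.support ⊆ H) with hTdef
  -- facts about members of T
  have hTfacts : ∀ c ∈ T, 2 ≤ c.support.card ∧ c.support.card ≤ n ∧
      (∀ x ∈ c.support, x ∈ H ∧ α x ≠ x ∧ c = α.cycleOf x) := by
    intro c hc
    rw [hTdef, Finset.mem_filter] at hc
    obtain ⟨hcf, hcs⟩ := hc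
    have hcyc' := (Equiv.Perm.mem_cycleFactorsFinset_iff.mp hcf).1
    have h2 := hcyc'.two_le_card_support
    refine ⟨h2, ?_, ?_⟩
    · simpa using Finset.card_le_card (Finset.subset_univ c.support)
    · intro x hx
      have hne : c x ≠ x := Equiv.Perm.mem_support.mp hx
      have hax : α x = c x :=
        ((Equiv.Perm.mem_cycleFactorsFinset_iff.mp hcf).2 x hx).symm
      exact ⟨hcs hx, by rw [hax]; exact hne,
        Equiv.Perm.cycle_is_cycleOf hx hcf⟩
  refine ⟨fun j => if j = 1 then Hf.card else (T.filter fun c => c.support.card = j).card,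
    ?_, ?_, ?_⟩
  · -- bounds
    intro j
    by_cases hj : j = 1
    · subst hj
      simp only [cycleCount, ↓reduceIte]
      have : Hf ⊆ α.supportᶜ := by
        intro x hx
        rw [hHfdef, Finset.mem_filter] at hx
        simp [Equiv.Perm.mem_support, hx.2]
      calc Hf.card ≤ α.supportᶜ.card := Finset.card_le_card this
        _ = n - α.support.card := by
          rw [Finset.card_compl, Fintype.card_fin]
    · simp only [if_neg hj, cycleCount, Equiv.Perm.cycleType]
      rw [Multiset.count_map]
      have : (T.filter fun c => c.support.card = j).val ≤
          Multiset.filter (fun a => j = (Finset.card ∘ Equiv.Perm.support) a)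
            α.cycleFactorsFinset.val := by
        rw [← Finset.filter_val]
        apply Finset.val_le_iff.mpr
        intro c hc
        rw [Finset.mem_filter] at hc ⊢
        obtain ⟨hc1, hc2⟩ := hc
        rw [hTdef, Finset.mem_filter] at hc1
        exact ⟨hc1.1, hc2.symm⟩
      exact Multiset.card_le_card this
  · -- divisibility
    intro j hdj
    by_cases hj : j = 1
    · subst hj
      simp only [↓reduceIte]
      rw [Finset.card_eq_zero, Finset.filter_eq_empty_iff]
      intro x hx hfix
      apply hdj
      have := hdiv x hx
      rwa [cycleLengthAt, if_pos hfix] at this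
    · simp only [if_neg hj]
      rw [Finset.card_eq_zero, Finset.filter_eq_empty_iff]
      intro c hc hcard
      obtain ⟨h1, h2, h3⟩ := hTfacts c hc
      obtain ⟨x, hx⟩ := Finset.card_pos.mp (by omega : 0 < c.support.card)
      obtain ⟨hxH, hxne, hceq⟩ := h3 x hx
      apply hdj
      have := hdiv x hxH
      rwa [cycleLengthAt, if_neg hxne, ← hceq, hcard] at this
  · -- the sum
    -- decomposition of H
    have hdecomp : H = Hf ∪ T.biUnion Equiv.Perm.support := by
      ext x
      constructor
      · intro hx
        by_cases hfix : α x = x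
        · exact Finset.mem_union_left _ (Finset.mem_filter.mpr ⟨hx, hfix⟩)
        · refine Finset.mem_union_right _ (Finset.mem_biUnion.mpr ⟨α.cycleOf x, ?_, ?_⟩)
          · rw [hTdef, Finset.mem_filter]
            exact ⟨Equiv.Perm.cycleOf_mem_cycleFactorsFinset_iff.mpr
              (Equiv.Perm.mem_support.mpr hfix), hcyc x hx⟩
          · exact Equiv.Perm.mem_support_cycleOf_iff.mpr
              ⟨Equiv.Perm.SameCycle.refl _ _, Equiv.Perm.mem_support.mpr hfix⟩
      · intro hx
        rcases Finset.mem_union.mp hx with hx | hx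
        · exact (Finset.mem_filter.mp hx).1
        · obtain ⟨c, hc, hxc⟩ := Finset.mem_biUnion.mp hx
          exact ((hTfacts c hc).2.2 x hxc).1
    have hdisj : Disjoint Hf (T.biUnion Equiv.Perm.support) := by
      rw [Finset.disjoint_left]
      intro x hx hx'
      obtain ⟨c, hc, hxc⟩ := Finset.mem_biUnion.mp hx'
      exact ((hTfacts c hc).2.2 x hxc).2.1 (Finset.mem_filter.mp hx).2
    have hpair : ∀ c ∈ T, ∀ c' ∈ T, c ≠ c' →
        Disjoint c.support c'.support := by
      intro c hc c' hc' hne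
      have := α.cycleFactorsFinset_pairwise_disjoint
        (Finset.mem_filter.mp hc).1 (Finset.mem_filter.mp hc').1 hne
      exact this.disjoint_support
    have hcard : H.card = Hf.card + ∑ c ∈ T, c.support.card := by
      rw [hdecomp, Finset.card_union_of_disjoint hdisj, Finset.card_biUnion hpair]
    rw [hcard]
    rcases Nat.eq_zero_or_pos n with hn | hn
    · subst hn
      have hT0 : T = ∅ := by
        rw [Finset.eq_empty_iff_forall_notMem]
        intro c hc
        have := (hTfacts c hc).1
        have h2 := (hTfacts c hc).2.1
        omega
      have hHf0 : Hf = ∅ := Finset.eq_empty_of_isEmpty Hf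
      simp [hT0, hHf0]
    · have h1mem : (1 : ℕ) ∈ Finset.range (n + 1) := by
        rw [Finset.mem_range]; omega
      rw [← Finset.add_sum_erase _ _ h1mem]
      simp only [↓reduceIte, mul_one]
      congr 1
      have hmaps : ∀ c ∈ T, c.support.card ∈ (Finset.range (n + 1)).erase 1 := by
        intro c hc
        rw [Finset.mem_erase, Finset.mem_range]
        refine ⟨?_, ?_⟩ <;> · have h1 := (hTfacts c hc).1; have h2 := (hTfacts c hc).2.1; omega
      rw [← Finset.sum_fiberwise_of_maps_to hmaps (fun c => c.support.card)]
      apply Finset.sum_congr rfl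
      intro j hj
      have hj1 : j ≠ 1 := (Finset.mem_erase.mp hj).1
      rw [if_neg hj1]
      rw [Finset.sum_congr rfl (fun c hc => (Finset.mem_filter.mp hc).2),
        Finset.sum_const, smul_eq_mul, mul_comm]
end

section
/- Let e be an integer, α ∈ Sₙ with order w = orderOf α, and let y ∈ Sₙ be a solution of the power conjugate equation (e*α). Then: (a) y and yᵉ have the same cycle type; (b) y^(eʷ − 1) = 1 (integer power); (c) for every point x moved by y, if r = (y.cycleOf x).support.card is the length of the y-cycle through x, then r divides eʷ − 1 (as integers, i.e. (r : ℤ) ∣ eʷ − 1) and gcd(r, e) = 1. -/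
/-- if `y` solves `(e*α)` and `w = orderOf α`, then `y` and `y ^ e` have
the same cycle type, `y ^ (e ^ w - 1) = 1`, and every cycle length `r` of `y` satisfies
`(r : ℤ) ∣ e ^ w - 1` and `gcd(r, e) = 1`. -/
theorem stmt_6 (n : ℕ) (e : ℤ) (α y : Equiv.Perm (Fin n))
    (hy : α * y * α⁻¹ = y ^ e) (w : ℕ) (hw : w = orderOf α) :
    (y ^ e).cycleType = y.cycleType ∧
    y ^ (e ^ w - 1) = 1 ∧
    ∀ x : Fin n, y x ≠ x →
      ((((y.cycleOf x).support.card : ℤ) ∣ e ^ w - 1) ∧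
        Int.gcd ((y.cycleOf x).support.card : ℤ) e = 1) := by
  have hcyc : (y ^ e).cycleType = y.cycleType := by
    rw [← hy]
    exact Equiv.Perm.cycleType_conj
  have hk : ∀ k : ℕ, α ^ k * y * (α ^ k)⁻¹ = y ^ (e ^ k) := by
    intro k
    induction k with
    | zero => simp
    | succ k ih =>
      have : α ^ (k+1) * y * (α ^ (k+1))⁻¹ = α * (α ^ k * y * (α ^ k)⁻¹) * α⁻¹ := by
        group
      rw [this, ih]
      have hconj : α * y ^ (e ^ k) * α⁻¹ = (α * y * α⁻¹) ^ (e ^ k) := by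
        rw [conj_zpow]
      rw [hconj, hy, ← zpow_mul, pow_succ, mul_comm]
  have hfix : y ^ (e ^ w : ℤ) = y := by
    have := hk w
    rw [hw] at this ⊢
    rw [pow_orderOf_eq_one α] at this
    simp at this
    rw [← this]
  have hone : y ^ (e ^ w - 1) = 1 := by
    rw [zpow_sub, hfix, zpow_one, mul_inv_cancel]
  refine ⟨hcyc, hone, fun x hx => ?_⟩
  have hdvd1 : (orderOf y : ℤ) ∣ e ^ w - 1 := orderOf_dvd_iff_zpow_eq_one.mpr hone
  have hcyc' : (y.cycleOf x).IsCycle := Equiv.Perm.isCycle_cycleOf y hx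
  have hcard : (y.cycleOf x).support.card = orderOf (y.cycleOf x) := hcyc'.orderOf.symm
  have hdvd2 : orderOf (y.cycleOf x) ∣ orderOf y := Equiv.Perm.orderOf_cycleOf_dvd_orderOf y x
  have hrdvd : (((y.cycleOf x).support.card : ℤ)) ∣ e ^ w - 1 := by
    rw [hcard]
    exact dvd_trans (Int.natCast_dvd_natCast.mpr hdvd2) hdvd1
  refine ⟨hrdvd, ?_⟩
  -- gcd divides e^w - 1 and e^w, hence 1
  have hwpos : 0 < w := hw ▸ orderOf_pos α
  have hg1 : (Int.gcd ((y.cycleOf x).support.card : ℤ) e : ℤ) ∣ e ^ w - 1 :=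
    dvd_trans (Int.gcd_dvd_left _ _) hrdvd
  have hg2 : (Int.gcd ((y.cycleOf x).support.card : ℤ) e : ℤ) ∣ e ^ w :=
    dvd_pow (Int.gcd_dvd_right _ _) hwpos.ne'
  have hg3 : (Int.gcd ((y.cycleOf x).support.card : ℤ) e : ℤ) ∣ 1 := by
    have := dvd_sub hg2 hg1
    simpa using this
  have : Int.gcd ((y.cycleOf x).support.card : ℤ) e ∣ 1 := by exact_mod_cast hg3
  exact Nat.dvd_one.mp this
end

section
/- Let e be an integer, α ∈ Sₙ with order w = orderOf α, let y ∈ Sₙ be a solution of the power conjugate equation (e*α), and let r ≥ 2 be such that y has at least one cycle of length r. Let H_r be the set of points lying on y-cycles of length r, i.e. H_r = {x : y x ≠ x ∧ (y.cycleOf x).support.card = r}, and let t_r be the number of r-cycles of y. Then: (a) α maps H_r onto itself (α(H_r) = H_r); (b) |H_r| = t_r · r and t_r · r ∈ F₁(α); (c) for every c ∈ H_r, if d ≥ 1 is the least positive integer with α^d(c) ∈ (y.cycleOf c).support, then d divides w and d · r ∈ F_d(α). -/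
/-!
Conjugation by `α` carries the cycles of `y` onto those of `α * y * α⁻¹ = y ^ e`. Being conjugate
to `y`, the power `y ^ e` has the same order as `y`, so both generate the same cyclic group and
have the same cycles. Hence `α` permutes the cycles of `y`, preserving their lengths; this gives
(a) and (b).

For (c), the cycles of `y` through `c, α c, α² c, …` repeat with exact period `d`, so `d ∣ w`, and
their union `B` is an `α`-invariant set of `d · r` points on which every `α`-cycle has length
divisible by `d`. Finally, the lengths of the `α`-cycles inside any `α`-invariant set form a
sub-multiset of the cycle partition of `α`, and the sum of such a sub-multiset lies in the
`d`-range as soon as all its members are divisible by `d`.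
-/

open Equiv Equiv.Perm Finset

theorem zpowers_zpow_eq_of_conj_eq {G : Type*} [Group G] [Finite G] {a g : G} {e : ℤ}
    (h : a * g * a⁻¹ = g ^ e) : Subgroup.zpowers (g ^ e) = Subgroup.zpowers g := by
  refine Subgroup.eq_of_le_of_card_ge
    (Subgroup.zpowers_le.mpr (zpow_mem (Subgroup.mem_zpowers g) e)) ?_
  rw [Nat.card_zpowers, Nat.card_zpowers, ← h, ← MulAut.conj_apply]
  exact (orderOf_injective (MulAut.conj a).toMonoidHom (MulAut.conj a).injective g).ge

namespace Equiv.Perm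

theorem pow_apply_mem {X : Type*} {α : Perm X} {s : Finset X} (hs : ∀ x ∈ s, α x ∈ s) (k : ℕ)
    {x : X} (hx : x ∈ s) : (α ^ k) x ∈ s := by
  induction k with
  | zero => exact hx
  | succ k ih => rw [pow_succ', mul_apply]; exact hs _ ih

variable {X : Type*} [Fintype X] [DecidableEq X]

theorem image_filter_univ_of_apply_iff (α : Perm X) {p : X → Prop} [DecidablePred p]
    (hp : ∀ x, p (α x) ↔ p x) : (univ.filter p).image α = univ.filter p := by
  ext z
  simp only [mem_image, mem_filter, mem_univ, true_and]
  refine ⟨fun ⟨x, hx, hxz⟩ => hxz ▸ (hp x).mpr hx, fun hz => ⟨α⁻¹ z, ?_, by simp⟩⟩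
  exact (hp _).mp (by simpa using hz)

theorem support_cycleOf_eq_of_mem {f : Perm X} {a z : X} (h : z ∈ (f.cycleOf a).support) :
    (f.cycleOf z).support = (f.cycleOf a).support := by
  rw [(mem_support_cycleOf_iff.mp h).1.cycleOf_eq]

theorem disjoint_support_cycleOf_of_ne {f : Perm X} {a b : X}
    (h : (f.cycleOf a).support ≠ (f.cycleOf b).support) :
    _root_.Disjoint (f.cycleOf a).support (f.cycleOf b).support :=
  disjoint_left.mpr fun _ ha hb =>
    h ((support_cycleOf_eq_of_mem ha).symm.trans (support_cycleOf_eq_of_mem hb))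

theorem support_cycleOf_subset_of_mem_zpowers {f g : Perm X} (h : f ∈ Subgroup.zpowers g)
    (x : X) : (f.cycleOf x).support ⊆ (g.cycleOf x).support := by
  obtain ⟨k, rfl⟩ := Subgroup.mem_zpowers_iff.mp h
  intro z hz
  rw [mem_support_cycleOf_iff] at hz ⊢
  exact ⟨hz.1.of_zpow, support_zpow_le g k hz.2⟩

theorem support_cycleOf_eq_of_zpowers_eq {f g : Perm X}
    (h : Subgroup.zpowers f = Subgroup.zpowers g) (x : X) :
    (f.cycleOf x).support = (g.cycleOf x).support := by
  refine (support_cycleOf_subset_of_mem_zpowers ?_ x).antisymm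
    (support_cycleOf_subset_of_mem_zpowers ?_ x)
  · exact h ▸ Subgroup.mem_zpowers f
  · exact h.symm ▸ Subgroup.mem_zpowers g

theorem support_cycleOf_conj (α y : Perm X) (x : X) :
    ((α * y * α⁻¹).cycleOf (α x)).support = (y.cycleOf x).support.image α := by
  ext z
  rw [mem_support_cycleOf_iff, sameCycle_conj, support_conj, mem_map, mem_image]
  simp only [coe_inv, symm_apply_apply, toEmbedding_apply, EmbeddingLike.apply_eq_iff_eq,
    exists_eq_right]
  constructor
  · rintro ⟨hxz, hx⟩
    exact ⟨α⁻¹ z, mem_support_cycleOf_iff.mpr ⟨hxz, hx⟩, by simp⟩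
  · rintro ⟨a, ha, rfl⟩
    rw [mem_support_cycleOf_iff] at ha
    exact ⟨by simpa using ha.1, ha.2⟩

theorem biUnion_support_filter_cycleFactorsFinset (f : Perm X) (p : Perm X → Prop)
    [DecidablePred p] :
    (f.cycleFactorsFinset.filter p).biUnion support =
      univ.filter fun x => f x ≠ x ∧ p (f.cycleOf x) := by
  ext x
  simp only [mem_biUnion, mem_filter, mem_univ, true_and]
  constructor
  · rintro ⟨c, ⟨hc, hpc⟩, hx⟩
    rw [cycle_is_cycleOf hx hc] at hpc
    exact ⟨mem_support.mp (mem_cycleFactorsFinset_support_le hc hx), hpc⟩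
  · rintro ⟨hx, hpx⟩
    exact ⟨f.cycleOf x, ⟨cycleOf_mem_cycleFactorsFinset_iff.mpr (mem_support.mpr hx), hpx⟩,
      mem_support_cycleOf_iff.mpr ⟨SameCycle.refl _ _, mem_support.mpr hx⟩⟩

theorem card_filter_cycleOf_eq_sum (f : Perm X) (p : Perm X → Prop) [DecidablePred p] :
    #{x | f x ≠ x ∧ p (f.cycleOf x)} = ∑ c ∈ f.cycleFactorsFinset.filter p, #c.support := by
  rw [← biUnion_support_filter_cycleFactorsFinset, card_biUnion]
  intro c hc c' hc' hne
  exact (f.cycleFactorsFinset_pairwise_disjoint (mem_filter.mp hc).1 (mem_filter.mp hc').1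
    hne).disjoint_support

theorem card_filter_card_support_cycleOf_eq (f : Perm X) (r : ℕ) :
    #{x | f x ≠ x ∧ #(f.cycleOf x).support = r} = f.cycleType.count r * r := by
  rw [card_filter_cycleOf_eq_sum f fun c => #c.support = r,
    sum_congr rfl fun c hc => (mem_filter.mp hc).2, sum_const, smul_eq_mul, cycleType_def,
    Multiset.count_map, card_def, filter_val]
  simp only [Function.comp_apply, eq_comm]

section InvariantSet

variable {α : Perm X} {s : Finset X}

theorem support_cycleOf_subset (hs : ∀ x ∈ s, α x ∈ s) {x : X} (hx : x ∈ s) :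
    (α.cycleOf x).support ⊆ s := by
  intro z hz
  obtain ⟨k, -, -, rfl⟩ := (mem_support_cycleOf_iff.mp hz).1.exists_pow_eq
  exact pow_apply_mem hs k hx

theorem filter_cycleOf_support_subset (hs : ∀ x ∈ s, α x ∈ s) :
    (univ.filter fun x => α x ≠ x ∧ (α.cycleOf x).support ⊆ s) =
      s.filter fun x => α x ≠ x := by
  ext x
  simp only [mem_filter, mem_univ, true_and]
  refine ⟨fun ⟨hx, hxs⟩ => ⟨hxs ?_, hx⟩,
    fun ⟨hxs, hx⟩ => ⟨hx, support_cycleOf_subset hs hxs⟩⟩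
  exact mem_support_cycleOf_iff.mpr ⟨SameCycle.refl _ _, mem_support.mpr hx⟩

theorem exists_le_parts_partition_sum_eq_card (hs : ∀ x ∈ s, α x ∈ s) :
    ∃ t ≤ α.partition.parts, t.sum = #s ∧ ∀ j ∈ t, ∃ x ∈ s, (α ^ j) x = x := by
  set C := α.cycleFactorsFinset.filter fun c => c.support ⊆ s
  set F := s.filter fun x => α x = x
  refine ⟨C.val.map (fun c => #c.support) + Multiset.replicate #F 1, ?_, ?_, ?_⟩
  · rw [parts_partition, cycleType_def]
    refine add_le_add (Multiset.map_le_map (Multiset.filter_le _ _))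
      ((Multiset.replicate_le_replicate 1).mpr ?_)
    calc #F ≤ #α.supportᶜ := card_le_card fun x hx => by simpa using (mem_filter.mp hx).2
      _ = Fintype.card X - #α.support := card_compl _
  · rw [Multiset.sum_add, Multiset.sum_replicate, smul_eq_mul, mul_one, ← sum_eq_multiset_sum,
      ← card_filter_cycleOf_eq_sum, filter_cycleOf_support_subset hs, add_comm,
      card_filter_add_card_filter_not]
  · intro j hj
    rcases Multiset.mem_add.mp hj with hj | hj
    · obtain ⟨c, hc, rfl⟩ := Multiset.mem_map.mp hj
      obtain ⟨hcf, hcs⟩ := mem_filter.mp hc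
      obtain ⟨x, hx⟩ := (mem_cycleFactorsFinset_iff.mp hcf).1.nonempty_support
      refine ⟨x, hcs hx, ?_⟩
      rw [cycle_is_cycleOf hx hcf, ← pow_mod_card_support_cycleOf_self_apply, Nat.mod_self,
        pow_zero, one_apply]
    · obtain ⟨hF, rfl⟩ := Multiset.mem_replicate.mp hj
      obtain ⟨x, hx⟩ := card_ne_zero.mp hF
      exact ⟨x, (mem_filter.mp hx).1, by simpa using (mem_filter.mp hx).2⟩

end InvariantSet

def PermutesCycles (α y : Perm X) : Prop :=
  ∀ x, (y.cycleOf (α x)).support = (y.cycleOf x).support.image α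

theorem permutesCycles_of_conj_eq_zpow {α y : Perm X} {e : ℤ} (hy : α * y * α⁻¹ = y ^ e) :
    PermutesCycles α y := fun x => by
  rw [← support_cycleOf_eq_of_zpowers_eq (zpowers_zpow_eq_of_conj_eq hy), ← hy,
    support_cycleOf_conj]

def supportCycleOfOrbit (α y : Perm X) (c : X) (d : ℕ) : Finset X :=
  (range d).biUnion fun i => (y.cycleOf ((α ^ i) c)).support

namespace PermutesCycles

variable {α y : Perm X}

theorem image_filter_univ (hα : PermutesCycles α y) {r : ℕ} :
    (univ.filter fun x => y x ≠ x ∧ #(y.cycleOf x).support = r).image α =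
      univ.filter fun x => y x ≠ x ∧ #(y.cycleOf x).support = r := by
  refine image_filter_univ_of_apply_iff α fun x => ?_
  rw [← support_cycleOf_nonempty, ← support_cycleOf_nonempty, hα x, image_nonempty,
    card_image_of_injective _ α.injective]

theorem support_cycleOf_pow_apply (hα : PermutesCycles α y) (k : ℕ) (x : X) :
    (y.cycleOf ((α ^ k) x)).support = (y.cycleOf x).support.image ⇑(α ^ k) := by
  induction k generalizing x with
  | zero => simp
  | succ k ih => rw [pow_succ, mul_apply, ih, hα, image_image, coe_mul]

theorem support_cycleOf_pow_add_apply (hα : PermutesCycles α y) (i k : ℕ) (x : X) :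
    (y.cycleOf ((α ^ (i + k)) x)).support =
      (y.cycleOf ((α ^ k) x)).support.image ⇑(α ^ i) := by
  rw [pow_add, mul_apply, hα.support_cycleOf_pow_apply]

variable {c : X} {d : ℕ}

theorem periodic_support_cycleOf_pow_apply (hα : PermutesCycles α y)
    (hdc : (α ^ d) c ∈ (y.cycleOf c).support) :
    Function.Periodic (fun i => (y.cycleOf ((α ^ i) c)).support) d := fun i => by
  dsimp only
  rw [hα.support_cycleOf_pow_add_apply, support_cycleOf_eq_of_mem hdc,
    hα.support_cycleOf_pow_apply]

theorem pow_apply_mem_support_cycleOf_pow_apply (hα : PermutesCycles α y)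
    (hdc : (α ^ d) c ∈ (y.cycleOf c).support) (k : ℕ) :
    (α ^ k) c ∈ (y.cycleOf ((α ^ k) c)).support := by
  rw [hα.support_cycleOf_pow_apply]
  exact mem_image_of_mem _
    (mem_support_cycleOf_iff.mpr ⟨.refl _ _, (mem_support_cycleOf_iff.mp hdc).2⟩)

theorem support_cycleOf_pow_apply_eq_iff (hα : PermutesCycles α y)
    (hd : IsLeast {k | 1 ≤ k ∧ (α ^ k) c ∈ (y.cycleOf c).support} d) (i j : ℕ) :
    (y.cycleOf ((α ^ i) c)).support = (y.cycleOf ((α ^ j) c)).support ↔ i % d = j % d := by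
  have hper := hα.periodic_support_cycleOf_pow_apply hd.1.2
  refine ⟨fun h => ?_, fun h => by rw [← hper.map_mod_nat i, h, hper.map_mod_nat]⟩
  -- for `a < b < d`, equal cycles would make `b - a` a smaller candidate than `d`
  have key : ∀ a b, a < b → b < d →
      (y.cycleOf ((α ^ a) c)).support ≠ (y.cycleOf ((α ^ b) c)).support := by
    intro a b hab hbd heq
    rw [← Nat.add_sub_cancel' hab.le, hα.support_cycleOf_pow_add_apply,
      ← Nat.add_zero a, hα.support_cycleOf_pow_add_apply, Nat.add_zero,
      (image_injective (α ^ a).injective).eq_iff] at heq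
    have hmem := hα.pow_apply_mem_support_cycleOf_pow_apply hd.1.2 (b - a)
    rw [← heq, pow_zero, one_apply] at hmem
    have := hd.2 ⟨by omega, hmem⟩
    omega
  rw [← hper.map_mod_nat i, ← hper.map_mod_nat j] at h
  rcases lt_trichotomy (i % d) (j % d) with hij | hij | hij
  · exact absurd h (key _ _ hij (Nat.mod_lt _ hd.1.1))
  · exact hij
  · exact absurd h.symm (key _ _ hij (Nat.mod_lt _ hd.1.1))

theorem dvd_orderOf (hα : PermutesCycles α y)
    (hd : IsLeast {k | 1 ≤ k ∧ (α ^ k) c ∈ (y.cycleOf c).support} d) : d ∣ orderOf α := by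
  have h := (hα.support_cycleOf_pow_apply_eq_iff hd (orderOf α) 0).mp
    (by rw [pow_orderOf_eq_one, pow_zero])
  exact Nat.dvd_of_mod_eq_zero (by simpa using h)

theorem card_supportCycleOfOrbit (hα : PermutesCycles α y)
    (hd : IsLeast {k | 1 ≤ k ∧ (α ^ k) c ∈ (y.cycleOf c).support} d) :
    #(supportCycleOfOrbit α y c d) = d * #(y.cycleOf c).support := by
  rw [supportCycleOfOrbit, card_biUnion, sum_congr rfl fun i _ => by
    rw [hα.support_cycleOf_pow_apply, card_image_of_injective _ (α ^ i).injective],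
    sum_const, card_range, smul_eq_mul]
  intro i hi j hj hij
  refine disjoint_support_cycleOf_of_ne fun h => hij ?_
  rwa [hα.support_cycleOf_pow_apply_eq_iff hd, Nat.mod_eq_of_lt (mem_range.mp hi),
    Nat.mod_eq_of_lt (mem_range.mp hj)] at h

theorem mem_supportCycleOfOrbit_iff (hα : PermutesCycles α y)
    (hd : IsLeast {k | 1 ≤ k ∧ (α ^ k) c ∈ (y.cycleOf c).support} d) {x : X} :
    x ∈ supportCycleOfOrbit α y c d ↔ ∃ i, x ∈ (y.cycleOf ((α ^ i) c)).support := by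
  rw [supportCycleOfOrbit, mem_biUnion]
  refine ⟨fun ⟨i, _, hx⟩ => ⟨i, hx⟩,
    fun ⟨i, hx⟩ => ⟨i % d, mem_range.mpr (Nat.mod_lt _ hd.1.1), ?_⟩⟩
  rwa [(hα.periodic_support_cycleOf_pow_apply hd.1.2).map_mod_nat]

theorem apply_mem_supportCycleOfOrbit (hα : PermutesCycles α y)
    (hd : IsLeast {k | 1 ≤ k ∧ (α ^ k) c ∈ (y.cycleOf c).support} d) {x : X}
    (hx : x ∈ supportCycleOfOrbit α y c d) :
    α x ∈ supportCycleOfOrbit α y c d := by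
  obtain ⟨i, hi⟩ := (hα.mem_supportCycleOfOrbit_iff hd).mp hx
  refine (hα.mem_supportCycleOfOrbit_iff hd).mpr ⟨1 + i, ?_⟩
  rw [hα.support_cycleOf_pow_add_apply, pow_one]
  exact mem_image_of_mem α hi

theorem dvd_of_pow_apply_eq_self (hα : PermutesCycles α y)
    (hd : IsLeast {k | 1 ≤ k ∧ (α ^ k) c ∈ (y.cycleOf c).support} d) {x : X}
    (hx : x ∈ supportCycleOfOrbit α y c d) {k : ℕ} (hk : (α ^ k) x = x) : d ∣ k := by
  obtain ⟨i, hi⟩ := (hα.mem_supportCycleOfOrbit_iff hd).mp hx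
  have hki : x ∈ (y.cycleOf ((α ^ (k + i)) c)).support := by
    rw [hα.support_cycleOf_pow_add_apply, ← hk]
    exact mem_image_of_mem _ hi
  have h := (hα.support_cycleOf_pow_apply_eq_iff hd (k + i) i).mp
    ((support_cycleOf_eq_of_mem hki).symm.trans (support_cycleOf_eq_of_mem hi))
  exact Nat.modEq_zero_iff_dvd.mp (Nat.ModEq.add_right_cancel' i (by rwa [zero_add]))

end PermutesCycles

end Equiv.Perm

section DRange

variable {n : ℕ} (α : Perm (Fin n))

theorem cycleCount_eq_count_parts_partition (j : ℕ) :
    cycleCount α j = α.partition.parts.count j := by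
  rw [parts_partition, Multiset.count_add, Multiset.count_replicate, Fintype.card_fin,
    cycleCount]
  split_ifs with hj hj' hj'
  · subst hj
    rw [Multiset.count_eq_zero.mpr fun h => (one_lt_of_mem_cycleType h).false, zero_add]
  · exact absurd hj.symm hj'
  · exact absurd hj'.symm hj
  · rw [add_zero]

theorem sum_mem_dRange {d : ℕ} {t : Multiset ℕ} (ht : t ≤ α.partition.parts)
    (hd : ∀ j ∈ t, d ∣ j) : t.sum ∈ dRange α d := by
  refine ⟨t.count, fun j => ?_, fun j hj => Multiset.count_eq_zero.mpr fun h => hj (hd j h), ?_⟩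
  · rw [cycleCount_eq_count_parts_partition]
    exact Multiset.count_le_of_le j ht
  · refine (sum_multiset_count_of_subset t _ fun j hj => ?_).trans (sum_congr rfl fun j _ => ?_)
    · have hj := Multiset.le_sum_of_mem (Multiset.mem_of_le ht (Multiset.mem_toFinset.mp hj))
      rw [α.partition.parts_sum, Fintype.card_fin] at hj
      exact mem_range.mpr (Nat.lt_succ_of_le hj)
    · rw [smul_eq_mul]

theorem card_mem_dRange {d : ℕ} {s : Finset (Fin n)} (hs : ∀ x ∈ s, α x ∈ s)
    (hd : ∀ x ∈ s, ∀ k : ℕ, (α ^ k) x = x → d ∣ k) : #s ∈ dRange α d := by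
  obtain ⟨t, ht, hts, hfix⟩ := exists_le_parts_partition_sum_eq_card hs
  rw [← hts]
  refine sum_mem_dRange α ht fun j hj => ?_
  obtain ⟨x, hx, hjx⟩ := hfix j hj
  exact hd x hx j hjx

end DRange

theorem stmt_7_general (n : ℕ) (e : ℤ) (α y : Equiv.Perm (Fin n))
    (hy : α * y * α⁻¹ = y ^ e) (w : ℕ) (hw : w = orderOf α)
    (r : ℕ)
    (Hr : Finset (Fin n))
    (hHr : Hr = Finset.univ.filter fun x => y x ≠ x ∧ (y.cycleOf x).support.card = r)
    (tr : ℕ) (htr : tr = y.cycleType.count r) :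
    Hr.image α = Hr ∧
    (Hr.card = tr * r ∧ tr * r ∈ dRange α 1) ∧
    ∀ c ∈ Hr, ∀ d : ℕ, 1 ≤ d →
      (α ^ d) c ∈ (y.cycleOf c).support →
      (∀ d' : ℕ, 1 ≤ d' → (α ^ d') c ∈ (y.cycleOf c).support → d ≤ d') →
      d ∣ w ∧ d * r ∈ dRange α d := by
  have hα := permutesCycles_of_conj_eq_zpow hy
  have hαHr : Hr.image α = Hr := hHr ▸ hα.image_filter_univ
  have hcard : #Hr = tr * r := by rw [hHr, htr, card_filter_card_support_cycleOf_eq]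
  refine ⟨hαHr, ⟨hcard, hcard ▸ card_mem_dRange α (fun x hx => hαHr ▸ mem_image_of_mem α hx)
    fun _ _ _ _ => one_dvd _⟩, fun c hc d hd1 hdc hmin => ?_⟩
  have hd : IsLeast {k | 1 ≤ k ∧ (α ^ k) c ∈ (y.cycleOf c).support} d :=
    ⟨⟨hd1, hdc⟩, fun k hk => hmin k hk.1 hk.2⟩
  have hcr : #(y.cycleOf c).support = r := by
    rw [hHr] at hc
    exact (mem_filter.mp hc).2.2
  refine ⟨hw ▸ hα.dvd_orderOf hd, ?_⟩
  rw [← hcr, ← hα.card_supportCycleOfOrbit hd]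
  exact card_mem_dRange α (fun x hx => hα.apply_mem_supportCycleOfOrbit hd hx)
    fun x hx k hk => hα.dvd_of_pow_apply_eq_self hd hx hk

/-- let `y` solve `(e*α)`, let `r ≥ 2` be a cycle length of `y`, let `H_r`
be the set of points on `y`-cycles of length `r` and `t_r` the number of such cycles.
Then `α(H_r) = H_r`, `|H_r| = t_r · r ∈ F₁(α)`, and for every `c ∈ H_r` the least
`d ≥ 1` with `α ^ d c` on the `y`-cycle of `c` satisfies `d ∣ w` and `d·r ∈ F_d(α)`. -/
theorem stmt_7 (n : ℕ) (e : ℤ) (α y : Equiv.Perm (Fin n))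
    (hy : α * y * α⁻¹ = y ^ e) (w : ℕ) (hw : w = orderOf α)
    (r : ℕ) (hr2 : 2 ≤ r) (hr : r ∈ y.cycleType)
    (Hr : Finset (Fin n))
    (hHr : Hr = Finset.univ.filter fun x => y x ≠ x ∧ (y.cycleOf x).support.card = r)
    (tr : ℕ) (htr : tr = y.cycleType.count r) :
    Hr.image α = Hr ∧
    (Hr.card = tr * r ∧ tr * r ∈ dRange α 1) ∧
    ∀ c ∈ Hr, ∀ d : ℕ, 1 ≤ d →
      (α ^ d) c ∈ (y.cycleOf c).support →
      (∀ d' : ℕ, 1 ≤ d' → (α ^ d') c ∈ (y.cycleOf c).support → d ≤ d') →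
      d ∣ w ∧ d * r ∈ dRange α d :=
  stmt_7_general n e α y hy w hw r Hr hHr tr htr
end

section
/- Let e be an integer, α ∈ Sₙ, and let y ∈ Sₙ be a solution of the power conjugate equation (e*α). Let c be a point lying on a y-cycle of length r ≥ 2, and let d ≥ 1 be the least positive integer with α^d(c) ∈ (y.cycleOf c).support. If gcd(e^d − 1, r) = 1 (gcd taken in ℤ), then there exists an integer u such that the point z = y^u(c) lies on the y-cycle of c, is a fixed point of α^d (α^d(z) = z), and the α-cycle through z has length exactly d; in particular α has a cycle of length d. -/
/-- let `y` solve `(e*α)`, let `c` lie on a `y`-cycle of length `r ≥ 2`,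
and let `d ≥ 1` be the least positive integer with `α ^ d c` on the `y`-cycle of `c`.
If `gcd(e ^ d - 1, r) = 1` then some `z = y ^ u c` on that `y`-cycle is a fixed point
of `α ^ d` and the `α`-cycle through `z` has length exactly `d`. -/
theorem stmt_8 (n : ℕ) (e : ℤ) (α y : Equiv.Perm (Fin n))
    (hy : α * y * α⁻¹ = y ^ e)
    (c : Fin n) (r : ℕ) (hr2 : 2 ≤ r) (hc : (y.cycleOf c).support.card = r)
    (d : ℕ) (hd1 : 1 ≤ d)
    (hdmem : (α ^ d) c ∈ (y.cycleOf c).support)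
    (hdleast : ∀ d' : ℕ, 1 ≤ d' → (α ^ d') c ∈ (y.cycleOf c).support → d ≤ d')
    (hgcd : Int.gcd (e ^ d - 1) (r : ℤ) = 1) :
    ∃ u : ℤ, ((y ^ u) c ∈ (y.cycleOf c).support ∧
      (α ^ d) ((y ^ u) c) = (y ^ u) c ∧
      cycleLengthAt α ((y ^ u) c) = d) := by
  classical
  -- c is not fixed by y
  have hyc : y c ≠ c := by
    intro h
    rw [(Equiv.Perm.cycleOf_eq_one_iff y).mpr h] at hc
    simp at hc
    omega
  have hcsup : c ∈ y.support := Equiv.Perm.mem_support.mpr hyc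
  -- conjugation identities
  have key1 : ∀ t : ℤ, α * y ^ t = y ^ (e * t) * α := by
    intro t
    have h : α * y ^ t * α⁻¹ = (α * y * α⁻¹) ^ t := conj_zpow.symm
    rw [hy, ← zpow_mul] at h
    calc α * y ^ t = (α * y ^ t * α⁻¹) * α := by group
      _ = y ^ (e * t) * α := by rw [h]
  have key : ∀ k : ℕ, ∀ t : ℤ, α ^ k * y ^ t = y ^ (e ^ k * t) * α ^ k := by
    intro k
    induction k with
    | zero => intro t; simp
    | succ k ih =>
      intro t
      calc α ^ (k + 1) * y ^ t = α * (α ^ k * y ^ t) := by rw [pow_succ']; rw [mul_assoc]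
        _ = α * (y ^ (e ^ k * t) * α ^ k) := by rw [ih t]
        _ = (α * y ^ (e ^ k * t)) * α ^ k := by rw [mul_assoc]
        _ = (y ^ (e * (e ^ k * t)) * α) * α ^ k := by rw [key1]
        _ = y ^ (e ^ (k + 1) * t) * α ^ (k + 1) := by
            rw [mul_assoc, ← pow_succ']
            congr 1
            ring_nf
  have keyp : ∀ k : ℕ, ∀ t : ℤ, ∀ x : Fin n,
      (α ^ k) ((y ^ t) x) = (y ^ (e ^ k * t)) ((α ^ k) x) := by
    intro k t x
    have h := key k t
    have h2 := DFunLike.congr_fun h x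
    simpa [Equiv.Perm.mul_apply] using h2
  -- y^(m*r) fixes c
  have hcy : (y.cycleOf c).IsCycle := Equiv.Perm.isCycle_cycleOf y hyc
  have horder : orderOf (y.cycleOf c) = r := by rw [hcy.orderOf, hc]
  have hyr : ∀ m : ℤ, (y ^ (m * (r : ℤ))) c = c := by
    intro m
    have h1 : (y.cycleOf c) ^ (m * (r : ℤ)) = 1 := by
      rw [mul_comm, zpow_mul, zpow_natCast]
      rw [← horder, pow_orderOf_eq_one, one_zpow]
    have h2 := Equiv.Perm.cycleOf_zpow_apply_self y c (m * (r : ℤ))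
    rw [h1] at h2
    simpa using h2.symm
  -- α^d c = y^s c for some s
  obtain ⟨hsc, -⟩ := Equiv.Perm.mem_support_cycleOf_iff.mp hdmem
  obtain ⟨s, hs⟩ := hsc
  -- Bézout
  obtain ⟨a, b, hab⟩ := Int.isCoprime_iff_gcd_eq_one.mpr hgcd
  refine ⟨-s * a, ?_, ?_, ?_⟩
  · exact Equiv.Perm.mem_support_cycleOf_iff.mpr ⟨⟨-s * a, rfl⟩, hcsup⟩
  · -- α^d fixes z
    rw [keyp d (-s * a) c, ← hs, ← Equiv.Perm.mul_apply, ← zpow_add]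
    have hexp : e ^ d * (-s * a) + s = -s * a + s * b * (r : ℤ) := by
      linear_combination (-s) * hab
    rw [hexp, zpow_add, Equiv.Perm.mul_apply, hyr (s * b)]
  · -- cycle length at z is d
    have hfix : (α ^ d) ((y ^ (-s * a)) c) = (y ^ (-s * a)) c := by
      rw [keyp d (-s * a) c, ← hs, ← Equiv.Perm.mul_apply, ← zpow_add]
      have hexp : e ^ d * (-s * a) + s = -s * a + s * b * (r : ℤ) := by
        linear_combination (-s) * hab
      rw [hexp, zpow_add, Equiv.Perm.mul_apply, hyr (s * b)]
    have hmin : ∀ d' : ℕ, 1 ≤ d' → (α ^ d') ((y ^ (-s * a)) c) = (y ^ (-s * a)) c →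
        d ≤ d' := by
      intro d' hd' hfix'
      apply hdleast d' hd'
      rw [keyp d' (-s * a) c] at hfix'
      refine Equiv.Perm.mem_support_cycleOf_iff.mpr
        ⟨⟨-(e ^ d' * (-s * a)) + (-s * a), ?_⟩, hcsup⟩
      rw [zpow_add, Equiv.Perm.mul_apply, ← hfix', ← Equiv.Perm.mul_apply,
        ← zpow_add, neg_add_cancel, zpow_zero, Equiv.Perm.one_apply]
    by_cases hz : α ((y ^ (-s * a)) c) = (y ^ (-s * a)) c
    · have hle : d ≤ 1 := hmin 1 le_rfl (by simpa using hz)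
      unfold cycleLengthAt
      rw [if_pos hz]
      omega
    · unfold cycleLengthAt
      rw [if_neg hz]
      set z := (y ^ (-s * a)) c with hzdef
      have hcyz : (α.cycleOf z).IsCycle := Equiv.Perm.isCycle_cycleOf α hz
      set m := (α.cycleOf z).support.card with hm
      have hom : orderOf (α.cycleOf z) = m := hcyz.orderOf
      have hpow1 : (α.cycleOf z) ^ d = 1 := by
        rw [hcyz.pow_eq_one_iff]
        refine ⟨z, ?_, ?_⟩
        · rw [Equiv.Perm.cycleOf_apply_self]; exact hz
        · rw [Equiv.Perm.cycleOf_pow_apply_self]; exact hfix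
      have hmd : m ∣ d := by rw [← hom]; exact orderOf_dvd_of_pow_eq_one hpow1
      have hm1 : 1 ≤ m := by
        rcases Nat.eq_zero_or_pos m with h0 | h1
        · rw [h0] at hmd; simp at hmd; omega
        · exact h1
      have hzm : (α ^ m) z = z := by
        have h1 : (α.cycleOf z) ^ m = 1 := by rw [← hom]; exact pow_orderOf_eq_one _
        have h2 := Equiv.Perm.cycleOf_pow_apply_self α z m
        rw [h1] at h2
        simpa using h2.symm
      have hdm : d ≤ m := hmin m hm1 hzm
      have hmld : m ≤ d := Nat.le_of_dvd (by omega) hmd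
      omega
end

section
/- Let n ≥ 3, let e be an integer with e ∉ {−1, 0, 1}, and let r ≥ 2 be a divisor of n such that r divides e^(n/r) − 1 (as integers). Let α ∈ Sₙ be a cyclic permutation of length n (α is a cycle whose support has n elements). Then the power conjugate equation (e*α) has a non-trivial solution y ≠ 1 such that y^r = 1 and every point lies on a y-cycle of length exactly r (i.e. for every x, (y.cycleOf x).support.card = r). -/
/-!
Write `n = r * m` and model the `n`-cycle as `x ↦ x + 1` on `ZMod n`. As `e ^ m = 1` in `ZMod r`,
`e` is a unit there and `u x = e ^ (-x)` is well defined modulo `m`. Hence `y x = x + m * u x`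
is a permutation with `y ^ k x = x + k * m * u x`, so every point has exact period `r`, and
conjugation by `x ↦ x + 1` replaces `u x` by `u (x - 1) = e * u x`, turning `y` into `y ^ e`.
-/

open Equiv Finset Function

section AddShear

variable {G A : Type*} [AddGroup G] [AddCommGroup A] (ψ : A →+ G) (u : G → A)
  (hu : ∀ x a, u (x + ψ a) = u x)

include hu in
theorem apply_sub_eq_of_apply_add_eq (x : G) (a : A) : u (x - ψ a) = u x := by
  rw [sub_eq_add_neg, ← map_neg, hu]

def addShear : Perm G where
  toFun x := x + ψ (u x)
  invFun x := x - ψ (u x)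
  left_inv x := by simp only [hu, add_sub_cancel_right]
  right_inv x := by simp only [apply_sub_eq_of_apply_add_eq ψ u hu, sub_add_cancel]

theorem addShear_apply (x : G) : addShear ψ u hu x = x + ψ (u x) := rfl

theorem addShear_inv_apply (x : G) : (addShear ψ u hu)⁻¹ x = x - ψ (u x) := rfl

theorem addShear_zpow_apply (k : ℤ) (x : G) : (addShear ψ u hu ^ k) x = x + ψ (k • u x) := by
  induction k using Int.induction_on generalizing x with
  | zero => simp
  | succ k ih =>
    rw [zpow_add_one, Perm.mul_apply, ih, addShear_apply, hu, add_assoc, ← map_add, add_zsmul,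
      one_zsmul, add_comm (u x)]
  | pred k ih =>
    rw [zpow_sub_one, Perm.mul_apply, ih, addShear_inv_apply, apply_sub_eq_of_apply_add_eq ψ u hu,
      sub_eq_add_neg, ← map_neg, add_assoc, ← map_add, sub_zsmul, one_zsmul, add_comm (-u x)]

theorem addShear_pow_apply_eq_self_iff (hψ : Injective ψ) (k : ℕ) (x : G) :
    (addShear ψ u hu ^ k) x = x ↔ k • u x = 0 := by
  rw [← zpow_natCast, addShear_zpow_apply, add_eq_left, natCast_zsmul, map_eq_zero_iff ψ hψ]

end AddShear

namespace ZMod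

def scaleHom (r m : ℕ) : ZMod r →+ ZMod (r * m) :=
  lift r ⟨(AddMonoidHom.mulRight (m : ZMod (r * m))).comp (Int.castAddHom _), by
    simp [← Nat.cast_mul]⟩

theorem scaleHom_intCast (r m : ℕ) (k : ℤ) : scaleHom r m k = k * m := lift_coe _ _ _

theorem scaleHom_injective {r m : ℕ} [NeZero m] : Injective (scaleHom r m) := by
  refine (injective_iff_map_eq_zero _).2 fun a ha ↦ ?_
  obtain ⟨k, rfl⟩ := intCast_surjective a
  rw [scaleHom_intCast, ← Int.cast_natCast m, ← Int.cast_mul, intCast_zmod_eq_zero_iff_dvd,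
    Nat.cast_mul, mul_dvd_mul_iff_right (by exact_mod_cast NeZero.ne m)] at ha
  exact (intCast_zmod_eq_zero_iff_dvd k r).2 ha

theorem pow_val_add_natCast {M : Type*} [Monoid M] {n : ℕ} [NeZero n] {δ : M} (hδ : δ ^ n = 1)
    (x : ZMod n) (j : ℕ) : δ ^ (x + j).val = δ ^ x.val * δ ^ j := by
  rw [val_add, val_natCast, Nat.add_mod_mod, ← pow_eq_pow_mod _ hδ, pow_add]

theorem pow_val_add_scaleHom {r m : ℕ} [NeZero r] [NeZero m] {δ : (ZMod r)ˣ} (hδ : δ ^ m = 1)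
    (x : ZMod (r * m)) (a : ZMod r) : δ ^ (x + scaleHom r m a).val = δ ^ x.val := by
  have hδn : δ ^ (r * m) = 1 := by rw [pow_mul', hδ, one_pow]
  rw [← natCast_zmod_val a, ← Int.cast_natCast, scaleHom_intCast, Int.cast_natCast,
    ← Nat.cast_mul, pow_val_add_natCast hδn, pow_mul', hδ, one_pow, mul_one]

theorem exists_addRight_one_conj_eq_zpow {r m : ℕ} [NeZero r] [NeZero m] {e : ℤ}
    (he : (e : ZMod r) ^ m = 1) :
    ∃ y : Perm (ZMod (r * m)), Equiv.addRight 1 * y * (Equiv.addRight 1)⁻¹ = y ^ e ∧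
      ∀ x (k : ℕ), (y ^ k) x = x ↔ r ∣ k := by
  set ε := Units.ofPowEqOne (e : ZMod r) m he (NeZero.ne m)
  have hδ : ε⁻¹ ^ m = 1 := by rw [inv_pow, Units.pow_ofPowEqOne, inv_one]
  have hδn : ε⁻¹ ^ (r * m) = 1 := by rw [pow_mul', hδ, one_pow]
  set u : ZMod (r * m) → ZMod r := fun x ↦ ↑(ε⁻¹ ^ x.val)
  have hu : ∀ x a, u (x + scaleHom r m a) = u x := fun x a ↦ by
    simp only [u, pow_val_add_scaleHom hδ]
  refine ⟨addShear (scaleHom r m) u hu, ?_, fun x k ↦ ?_⟩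
  · have hstep : ∀ x, e • u (x + 1) = u x := fun x ↦ by
      dsimp only [u]
      rw [zsmul_eq_mul, ← Nat.cast_one, pow_val_add_natCast hδn, pow_one, Units.val_mul,
        ← Units.val_ofPowEqOne (e : ZMod r) m he (NeZero.ne m), mul_comm, mul_assoc,
        Units.inv_mul, mul_one]
    rw [mul_inv_eq_iff_eq_mul]
    ext x
    simp only [Perm.mul_apply, coe_addRight, addShear_apply, addShear_zpow_apply, hstep,
      add_right_comm]
  · rw [addShear_pow_apply_eq_self_iff _ _ hu scaleHom_injective, nsmul_eq_mul,
      Units.mul_left_eq_zero, natCast_eq_zero_iff]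

end ZMod

namespace Equiv.Perm

variable {X : Type*} [Fintype X] [DecidableEq X]

theorem card_support_cycleOf_eq_of_pow_apply_eq_self_iff {y : Perm X} {r : ℕ} (hr : r ≠ 1)
    (hy : ∀ x (k : ℕ), (y ^ k) x = x ↔ r ∣ k) (x : X) : #(y.cycleOf x).support = r := by
  have hyx : y x ≠ x := fun h ↦ hr (Nat.dvd_one.1 ((hy x 1).1 (by simpa using h)))
  have hyr : y ^ r = 1 := Perm.ext fun z ↦ (hy z r).2 dvd_rfl
  rw [← (y.isCycle_cycleOf hyx).orderOf]
  refine Nat.dvd_antisymm ((y.orderOf_cycleOf_dvd_orderOf x).trans (orderOf_dvd_of_pow_eq_one hyr))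
    ((hy x _).1 ?_)
  rw [← cycleOf_pow_apply_self, pow_orderOf_eq_one, one_apply]

theorem exists_permCongr_addRight_one_eq {n : ℕ} {α : Perm (Fin n)} (hα : α.IsCycle)
    (hcard : #α.support = n) : ∃ h : ZMod n ≃ Fin n, h.permCongr (Equiv.addRight 1) = α := by
  have hn : 2 ≤ n := hcard ▸ hα.two_le_card_support
  have : NeZero n := ⟨by omega⟩
  obtain ⟨β, hβ⟩ := isConj_iff.1 <| (isCycle_finRotate_of_le hn).isConj hα <| by
    rw [support_finRotate_of_le hn, card_univ, Fintype.card_fin, hcard]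
  refine ⟨(ZMod.finEquiv n).symm.toEquiv.trans β, ?_⟩
  rw [← hβ]
  ext x
  simp [permCongr_apply, finRotate_apply]

end Equiv.Perm

theorem stmt_9_general (n : ℕ) (e : ℤ)
    (r : ℕ) (hr2 : 2 ≤ r) (hrn : r ∣ n) (hdvd : (r : ℤ) ∣ e ^ (n / r) - 1)
    (α : Equiv.Perm (Fin n)) (hα : α.IsCycle) (hcard : α.support.card = n) :
    ∃ y : Equiv.Perm (Fin n), y ≠ 1 ∧ α * y * α⁻¹ = y ^ e ∧ y ^ r = 1 ∧
      ∀ x : Fin n, (y.cycleOf x).support.card = r := by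
  obtain ⟨m, rfl⟩ := hrn
  have hrm : 2 ≤ r * m := hcard ▸ hα.two_le_card_support
  have : NeZero r := ⟨by omega⟩
  have : NeZero m := ⟨by rintro rfl; simp at hrm⟩
  have he : (e : ZMod r) ^ m = 1 := by
    rw [Nat.mul_div_cancel_left m (NeZero.pos r)] at hdvd
    simpa [sub_eq_zero] using (ZMod.intCast_zmod_eq_zero_iff_dvd _ r).2 hdvd
  obtain ⟨y, hconj, hperiod⟩ := ZMod.exists_addRight_one_conj_eq_zpow he
  obtain ⟨h, rfl⟩ := Perm.exists_permCongr_addRight_one_eq hα hcard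
  have hperiod' : ∀ x (k : ℕ), (h.permCongrHom y ^ k) x = x ↔ r ∣ k := fun x k ↦ by
    rw [← map_pow, permCongrHom_coe, permCongr_apply, ← h.eq_symm_apply, hperiod]
  refine ⟨h.permCongrHom y, fun hy ↦ ?_, ?_, Perm.ext fun x ↦ (hperiod' x r).2 dvd_rfl,
    Perm.card_support_cycleOf_eq_of_pow_apply_eq_self_iff (by omega) hperiod'⟩
  · have := (hperiod' ⟨0, by omega⟩ 1).1 (by rw [hy, one_pow, Perm.one_apply])
    exact absurd (Nat.dvd_one.1 this) (by omega)
  · rw [← permCongrHom_coe, ← map_inv, ← map_mul, ← map_mul, hconj, map_zpow]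

/-- Theorem 2.8: if `r ≥ 2` divides `n ≥ 3` and `r ∣ e^(n/r) - 1`, then
for any cyclic `α ∈ Sₙ` of length `n` the equation `(e*α)` has a non-trivial solution
`y ≠ 1` with `y ^ r = 1` all of whose cycles have length exactly `r`. -/
theorem stmt_9 (n : ℕ) (hn : 3 ≤ n) (e : ℤ) (he : e ∉ ({-1, 0, 1} : Set ℤ))
    (r : ℕ) (hr2 : 2 ≤ r) (hrn : r ∣ n) (hdvd : (r : ℤ) ∣ e ^ (n / r) - 1)
    (α : Equiv.Perm (Fin n)) (hα : α.IsCycle) (hcard : α.support.card = n) :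
    ∃ y : Equiv.Perm (Fin n), y ≠ 1 ∧ α * y * α⁻¹ = y ^ e ∧ y ^ r = 1 ∧
      ∀ x : Fin n, (y.cycleOf x).support.card = r :=
  stmt_9_general n e r hr2 hrn hdvd α hα hcard
end

section
/- Let n ≥ 3, let e be an integer with e ∉ {−1, 0, 1}, and let α ∈ Sₙ be a cyclic permutation of length n. If d = gcd(n, eⁿ − 1) (gcd of the integer n and the integer eⁿ − 1) satisfies d ≠ 1, then the power conjugate equation (e*α) has a non-trivial solution y ≠ 1 such that y^d = 1. -/
/-!
Let `p` be a prime factor of `d` and write `n = p * m`. By Fermat, `e ^ (p * m) ≡ e ^ m (mod p)`,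
so `e ^ m ≡ 1 (mod p)` and hence `m * e ^ m = m` in `ZMod n`. Realise the `n`-cycle as `x ↦ x + 1`
on `ZMod n` and let `y x = x + m * e ^ (-x)`, the exponent being read modulo `m`. Since `y` only
adds multiples of `m`, it preserves residues mod `m`, so `y ^ k x = x + k * m * e ^ (-x)`: thus
`y ^ p = 1`, and conjugating `y` by `x ↦ x + 1` multiplies the shift by `e`, giving `y ^ e`.
Every `n`-cycle is conjugate to `x ↦ x + 1`.
-/

open Equiv

namespace Equiv.Perm

variable {G Q : Type*} [AddCommGroup G] [AddGroup Q] (π : G →+ Q)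

def shear : Multiplicative (Q → π.ker) →* Perm G where
  toFun h :=
    { toFun := fun x => x + (h.toAdd (π x) : G)
      invFun := fun x => x - (h.toAdd (π x) : G)
      left_inv := fun x => by simp [π.mem_ker.mp (h.toAdd _).2]
      right_inv := fun x => by simp [π.mem_ker.mp (h.toAdd _).2] }
  map_one' := by ext; simp
  map_mul' h₁ h₂ := by ext x; simp [π.mem_ker.mp (h₂.toAdd _).2, add_comm, add_left_comm]

@[simp]
theorem shear_apply (h : Multiplicative (Q → π.ker)) (x : G) :
    shear π h x = x + (h.toAdd (π x) : G) := rfl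

theorem addRight_mul_shear_mul_inv (a : G) (h : Multiplicative (Q → π.ker)) :
    Equiv.addRight a * shear π h * (Equiv.addRight a)⁻¹ =
      shear π (.ofAdd fun q => h.toAdd (q - π a)) := by
  ext x
  simp [sub_eq_add_neg, add_right_comm]

end Equiv.Perm

open Equiv.Perm

theorem mul_pow_eq_mul_pow_of_modEq {M : Type*} [CommMonoid M] {a b : M} {m i j : ℕ}
    (h : a * b ^ m = a) (hij : i ≡ j [MOD m]) : a * b ^ i = a * b ^ j := by
  have hmul : ∀ r q, a * b ^ (r + m * q) = a * b ^ r := by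
    intro r q
    induction q with
    | zero => simp
    | succ q ih => rw [Nat.mul_succ, ← add_assoc, pow_add, ← mul_assoc, ih, mul_right_comm, h]
  rw [← Nat.mod_add_div i m, ← Nat.mod_add_div j m, hmul, hmul, hij]

theorem Int.pow_modEq_one_of_pow_mul_modEq_one {p : ℕ} [Fact p.Prime] {e : ℤ} {m : ℕ}
    (h : e ^ (p * m) ≡ 1 [ZMOD p]) : e ^ m ≡ 1 [ZMOD p] := by
  rw [← ZMod.intCast_eq_intCast_iff] at h ⊢
  push_cast at h ⊢
  rwa [pow_mul, ZMod.pow_card] at h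

theorem ZMod.natCast_mul_intCast_pow_eq_self {p m : ℕ} {e : ℤ} (he : e ^ m ≡ 1 [ZMOD p]) :
    (m : ZMod (p * m)) * (e : ZMod (p * m)) ^ m = m := by
  have hmod : (m : ℤ) * e ^ m ≡ m [ZMOD (p * m : ℕ)] := by
    simpa [mul_comm (p : ℤ)] using he.mul_left' (c := (m : ℤ))
  simpa using (ZMod.intCast_eq_intCast_iff _ _ _).mpr hmod

theorem ZMod.natCast_ne_zero_of_one_lt {p m : ℕ} [NeZero m] (hp : 1 < p) :
    (m : ZMod (p * m)) ≠ 0 := by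
  rw [Ne, ZMod.natCast_eq_zero_iff]
  intro h
  nlinarith [Nat.le_of_dvd (NeZero.pos m) h, NeZero.pos m]

theorem exists_ne_one_addRight_conj_eq_zpow {p m : ℕ} [NeZero m] (hp : 1 < p) {e : ℤ}
    (he : e ^ m ≡ 1 [ZMOD p]) :
    ∃ y : Perm (ZMod (p * m)), y ≠ 1 ∧
      Equiv.addRight 1 * y * (Equiv.addRight 1)⁻¹ = y ^ e ∧ y ^ p = 1 := by
  let π : ZMod (p * m) →+ ZMod m := (ZMod.castHom (dvd_mul_left m p) (ZMod m)).toAddMonoidHom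
  have hker (x : ZMod (p * m)) : (m : ZMod (p * m)) * x ∈ π.ker := by simp [π]
  let h : ZMod m → π.ker := fun r => ⟨m * (e : ZMod (p * m)) ^ (-r).val, hker _⟩
  have hshift : (fun r => h (r - π 1)) = e • h := by
    ext r
    have hexp : (-(r - 1)).val ≡ (-r).val + 1 [MOD m] := by
      rw [← ZMod.natCast_eq_natCast_iff]
      push_cast
      rw [ZMod.natCast_zmod_val, ZMod.natCast_zmod_val]
      ring
    rw [Pi.smul_apply, AddSubgroup.coe_zsmul, zsmul_eq_mul]
    simp only [h, π, RingHom.toAddMonoidHom_eq_coe, AddMonoidHom.coe_coe, map_one]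
    rw [mul_pow_eq_mul_pow_of_modEq (ZMod.natCast_mul_intCast_pow_eq_self he) hexp, pow_succ]
    ring
  have hperiod : p • h = 0 := by
    ext r
    simp only [h, Pi.smul_apply, AddSubgroup.coe_nsmul, nsmul_eq_mul]
    rw [← mul_assoc, ← Nat.cast_mul, ZMod.natCast_self, zero_mul, Pi.zero_apply,
      ZeroMemClass.coe_zero]
  refine ⟨shear π (.ofAdd h), fun h1 => ?_, ?_, ?_⟩
  · exact ZMod.natCast_ne_zero_of_one_lt hp (by simpa [h] using DFunLike.congr_fun h1 0)
  · rw [addRight_mul_shear_mul_inv, toAdd_ofAdd, hshift, ofAdd_zsmul, map_zpow]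
  · rw [← map_pow, ← ofAdd_nsmul, hperiod, ofAdd_zero, map_one]

theorem MulEquiv.exists_ne_one_conj_eq_zpow {G H : Type*} [Group G] [Group H] (f : G ≃* H)
    {a : G} {e : ℤ} {d : ℕ} (h : ∃ y, y ≠ 1 ∧ a * y * a⁻¹ = y ^ e ∧ y ^ d = 1) :
    ∃ y, y ≠ 1 ∧ f a * y * (f a)⁻¹ = y ^ e ∧ y ^ d = 1 := by
  obtain ⟨y, hy1, hconj, hpow⟩ := h
  refine ⟨f y, (map_ne_one_iff f).mpr hy1, ?_, by rw [← map_pow, hpow, map_one]⟩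
  rw [← map_inv, ← map_mul, ← map_mul, hconj, map_zpow]

theorem ZMod.finEquiv_symm_permCongrHom_addRight_one (n : ℕ) [NeZero n] :
    (ZMod.finEquiv n).symm.toEquiv.permCongrHom (Equiv.addRight 1) = finRotate n := by
  ext i
  simp [Equiv.permCongr_apply, finRotate_apply]

theorem stmt_10_general (n : ℕ) (e : ℤ)
    (α : Equiv.Perm (Fin n)) (hα : α.IsCycle) (hcard : α.support.card = n)
    (d : ℕ) (hd : d = Int.gcd (n : ℤ) (e ^ n - 1)) (hd1 : d ≠ 1) :
    ∃ y : Equiv.Perm (Fin n), y ≠ 1 ∧ α * y * α⁻¹ = y ^ e ∧ y ^ d = 1 := by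
  obtain ⟨p, hp, hpd⟩ : ∃ p, p.Prime ∧ p ∣ d := ⟨d.minFac, Nat.minFac_prime hd1, d.minFac_dvd⟩
  have : Fact p.Prime := ⟨hp⟩
  have hpg : (p : ℤ) ∣ Int.gcd n (e ^ n - 1) := hd ▸ Int.natCast_dvd_natCast.mpr hpd
  have hpn : p ∣ n := Int.natCast_dvd_natCast.mp (hpg.trans (Int.gcd_dvd_left _ _))
  have hpe : e ^ n ≡ 1 [ZMOD p] := (Int.modEq_iff_dvd.mpr (hpg.trans (Int.gcd_dvd_right _ _))).symm
  have hn : 2 ≤ n := hcard ▸ two_le_card_support_of_ne_one hα.ne_one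
  obtain ⟨m, rfl⟩ := hpn
  have : NeZero m := ⟨by rintro rfl; omega⟩
  obtain ⟨y, hy1, hconj, hyp⟩ :=
    exists_ne_one_addRight_conj_eq_zpow hp.one_lt (Int.pow_modEq_one_of_pow_mul_modEq_one hpe)
  have hyd : y ^ d = 1 :=
    orderOf_dvd_iff_pow_eq_one.mp ((orderOf_dvd_of_pow_eq_one hyp).trans hpd)
  have hrot := (ZMod.finEquiv (p * m)).symm.toEquiv.permCongrHom.exists_ne_one_conj_eq_zpow
    ⟨y, hy1, hconj, hyd⟩
  rw [ZMod.finEquiv_symm_permCongrHom_addRight_one] at hrot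
  obtain ⟨σ, rfl⟩ := isConj_iff.mp ((isCycle_finRotate_of_le hn).isConj hα
    (by rw [support_finRotate_of_le hn, Finset.card_univ, Fintype.card_fin, hcard]))
  exact (MulAut.conj σ).exists_ne_one_conj_eq_zpow hrot

/-- Corollary 2.9: if `α ∈ Sₙ` is cyclic of length `n ≥ 3` and
`d = gcd(n, e ^ n - 1) ≠ 1`, then `(e*α)` has a non-trivial solution `y ≠ 1` with
`y ^ d = 1`. -/
theorem stmt_10 (n : ℕ) (hn : 3 ≤ n) (e : ℤ) (he : e ∉ ({-1, 0, 1} : Set ℤ))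
    (α : Equiv.Perm (Fin n)) (hα : α.IsCycle) (hcard : α.support.card = n)
    (d : ℕ) (hd : d = Int.gcd (n : ℤ) (e ^ n - 1)) (hd1 : d ≠ 1) :
    ∃ y : Equiv.Perm (Fin n), y ≠ 1 ∧ α * y * α⁻¹ = y ^ e ∧ y ^ d = 1 :=
  stmt_10_general n e α hα hcard d hd hd1
end

section
/- Let e be an integer with e ∉ {−1, 0, 1} and let α ∈ Sₙ be a permutation that has at least one cycle of length a, for some 2 ≤ a ≤ n such that d = gcd(a, eᵃ − 1) ≠ 1 (gcd of the integer a and the integer eᵃ − 1). Then the power conjugate equation (e*α) has a non-trivial solution y ≠ 1 such that y^d = 1. -/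
/-!
Let `c` be an `a`-cycle of `α`, `p` a prime factor of `d` and `a = p m`. By Fermat,
`e ^ m = e ^ (p m) = e ^ a = 1` in `ZMod p`. Since the orbit of a point `x` of `c` has length `a`,
the weight `w ((c⁻¹ ^ i) x) = e ^ i ∈ ZMod p` is well defined on it (and `w = 0` elsewhere), and
`e ^ m = 1` makes `w` invariant under `g = c⁻¹ ^ m`. Then `y z = (g ^ w z) z` is a permutation with
`y ^ p = 1` (as `g ^ p = 1`) and `y x = g x ≠ x`. As `α` commutes with `g` and agrees with `c` on
the support of `c`, `α y α⁻¹` is built in the same way from the weight `w ∘ α⁻¹ = e w`, hence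
equals `y ^ e`.
-/

namespace Equiv.Perm

variable {X : Type*} {g : Perm X} {ψ : X → ℤ}

theorem apply_zpow_apply_of_invariant (hψ : ∀ z, ψ (g z) = ψ z) (j : ℤ) (z : X) :
    ψ ((g ^ j) z) = ψ z := by
  induction j using Int.induction_on generalizing z with
  | zero => rfl
  | succ j ih => rw [zpow_add_one, mul_apply, ih, hψ]
  | pred j ih =>
    rw [zpow_sub_one, mul_apply, ih, ← hψ (g⁻¹ z), ← mul_apply, mul_inv_cancel, one_apply]

def zpowBy (g : Perm X) (ψ : X → ℤ) (hψ : ∀ z, ψ (g z) = ψ z) : Perm X where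
  toFun z := (g ^ ψ z) z
  invFun z := (g ^ (-ψ z)) z
  left_inv z := by
    simp only [apply_zpow_apply_of_invariant hψ, ← mul_apply, ← zpow_add, neg_add_cancel,
      zpow_zero, one_apply]
  right_inv z := by
    simp only [apply_zpow_apply_of_invariant hψ, ← mul_apply, ← zpow_add, add_neg_cancel,
      zpow_zero, one_apply]

theorem zpowBy_apply (hψ : ∀ z, ψ (g z) = ψ z) (z : X) :
    zpowBy g ψ hψ z = (g ^ ψ z) z := rfl

theorem zpowBy_inv_apply (hψ : ∀ z, ψ (g z) = ψ z) (z : X) :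
    (zpowBy g ψ hψ)⁻¹ z = (g ^ (-ψ z)) z := rfl

theorem zpowBy_zpow_apply (hψ : ∀ z, ψ (g z) = ψ z) (j : ℤ) (z : X) :
    (zpowBy g ψ hψ ^ j) z = (g ^ (j * ψ z)) z := by
  induction j using Int.induction_on generalizing z with
  | zero => simp
  | succ j ih =>
    rw [zpow_add_one, mul_apply, ih, zpowBy_apply, apply_zpow_apply_of_invariant hψ,
      ← mul_apply, ← zpow_add, add_mul, one_mul]
  | pred j ih =>
    rw [zpow_sub_one, mul_apply, ih, zpowBy_inv_apply, apply_zpow_apply_of_invariant hψ,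
      ← mul_apply, ← zpow_add, sub_mul, one_mul, sub_eq_add_neg]

theorem zpowBy_ne_one (hψ : ∀ z, ψ (g z) = ψ z) {x : X} (hgx : g x ≠ x) (hψx : ψ x = 1) :
    zpowBy g ψ hψ ≠ 1 := fun h => hgx <| by
  simpa only [zpowBy_apply, hψx, zpow_one, one_apply] using congr($h x)

theorem zpowBy_pow_eq_one (hψ : ∀ z, ψ (g z) = ψ z) {n : ℕ} (hn : g ^ n = 1) :
    zpowBy g ψ hψ ^ n = 1 := by
  ext z
  rw [← zpow_natCast, zpowBy_zpow_apply, zpow_mul, zpow_natCast, hn, one_zpow, one_apply]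

theorem conj_zpowBy (hψ : ∀ z, ψ (g z) = ψ z) {α : Perm X} (hα : Commute α g) {n : ℕ}
    (hn : g ^ n = 1) {e : ℤ} (he : ∀ z, g z ≠ z → ψ z ≡ e * ψ (α z) [ZMOD n]) :
    α * zpowBy g ψ hψ * α⁻¹ = zpowBy g ψ hψ ^ e := by
  ext w
  obtain ⟨z, rfl⟩ := α.surjective w
  rw [mul_apply, mul_apply, ← mul_apply α⁻¹, inv_mul_cancel, one_apply, zpowBy_apply,
    zpowBy_zpow_apply, ← mul_apply, (hα.zpow_right _).eq, mul_apply]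
  by_cases hz : g z = z
  · have hαz : g (α z) = α z := by rw [← mul_apply, ← hα.eq, mul_apply, hz]
    rw [zpow_apply_eq_self_of_apply_eq_self hαz, zpow_apply_eq_self_of_apply_eq_self hαz]
  · rw [zpow_eq_zpow_emod' _ hn, (he z hz).eq, ← zpow_eq_zpow_emod' _ hn]

theorem IsCycle.exists_apply_pow_apply_eq_pow_mul [Finite X] {M : Type*} [MonoidWithZero M]
    {c : Perm X} (hc : c.IsCycle) {x : X} (hx : c x ≠ x) {u : M} (hu : u ^ orderOf c = 1) :
    ∃ f : X → M, f x = 1 ∧ ∀ (n : ℕ) (z : X), f ((c ^ n) z) = u ^ n * f z := by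
  classical
  have pow_eq_of_apply_eq : ∀ i j : ℕ, (c ^ i) x = (c ^ j) x → u ^ i = u ^ j := by
    intro i j h
    have hij : i % orderOf c = j % orderOf c :=
      pow_eq_pow_iff_modEq.1 (hc.pow_eq_pow_iff.2 ⟨x, hx, h⟩)
    rw [pow_eq_pow_mod i hu, hij, ← pow_eq_pow_mod j hu]
  let f : X → M := fun z => if h : c.SameCycle x z then u ^ h.exists_pow_eq'.choose else 0
  have f_pow_apply : ∀ i : ℕ, f ((c ^ i) x) = u ^ i := fun i => by
    have h : c.SameCycle x ((c ^ i) x) := ⟨i, zpow_natCast c i ▸ rfl⟩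
    simp only [f, dif_pos h]
    exact pow_eq_of_apply_eq _ _ h.exists_pow_eq'.choose_spec.2
  refine ⟨f, by simpa using f_pow_apply 0, fun n z => ?_⟩
  by_cases hz : c.SameCycle x z
  · obtain ⟨i, -, rfl⟩ := hz.exists_pow_eq'
    rw [← mul_apply, ← pow_add, f_pow_apply, f_pow_apply, pow_add]
  · have hnz : ¬c.SameCycle x ((c ^ n) z) := sameCycle_pow_right.not.2 hz
    simp only [f, dif_neg hz, dif_neg hnz, mul_zero]

theorem exists_conj_eq_zpow_of_mem_cycleFactorsFinset [Fintype X] [DecidableEq X]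
    {α c : Perm X} (hcα : c ∈ α.cycleFactorsFinset) {p m : ℕ} [Fact p.Prime]
    (hcm : c.support.card = p * m) {e : ℤ} (he : (e : ZMod p) ^ m = 1) :
    ∃ y : Perm X, y ≠ 1 ∧ α * y * α⁻¹ = y ^ e ∧ y ^ p = 1 := by
  obtain ⟨hc, hcα_apply⟩ := mem_cycleFactorsFinset_iff.1 hcα
  have hc_ord : orderOf c⁻¹ = p * m := by rw [orderOf_inv, hc.orderOf, hcm]
  obtain ⟨x, hx, -⟩ := hc.inv
  obtain ⟨f, hfx, hf⟩ := hc.inv.exists_apply_pow_apply_eq_pow_mul hx (u := (e : ZMod p))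
    (by rw [hc_ord, mul_comm, pow_mul, he, one_pow])
  have hm0 : m ≠ 0 := by
    rintro rfl
    simpa [hcm] using hc.two_le_card_support
  have hm : m < orderOf c⁻¹ := by
    rw [hc_ord]
    nlinarith [(Fact.out : p.Prime).two_le, Nat.pos_of_ne_zero hm0]
  set g := c⁻¹ ^ m
  set ψ : X → ℤ := fun z => ((f z).val : ℤ)
  have hψ : ∀ z, ψ (g z) = ψ z := fun z => by simp only [ψ, g, hf, he, one_mul]
  have hg_p : g ^ p = 1 := by rw [← pow_mul, mul_comm, ← hc_ord, pow_orderOf_eq_one]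
  have hgx : g x ≠ x := fun h =>
    pow_ne_one_of_lt_orderOf hm0 hm ((hc.inv.pow_eq_one_iff' hx).2 h)
  have hψ_conj : ∀ z, g z ≠ z → ψ z ≡ e * ψ (α z) [ZMOD p] := fun z hgz => by
    have hcz : c z ≠ z := fun h => hgz (pow_apply_eq_self_of_apply_eq_self
      (by rw [inv_eq_iff_eq, h]) m)
    have hfz : f z = e * f (c z) := by simpa using hf 1 (c z)
    rw [← hcα_apply z (mem_support.2 hcz), ← ZMod.intCast_eq_intCast_iff]
    push_cast [ψ, ZMod.natCast_zmod_val]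
    exact hfz
  have hα : Commute α g := (self_mem_cycle_factors_commute hcα).symm.inv_right.pow_right m
  have hψx : ψ x = 1 := by simp only [ψ, hfx, ZMod.val_one, Nat.cast_one]
  exact ⟨zpowBy g ψ hψ, zpowBy_ne_one hψ hgx hψx,
    conj_zpowBy hψ hα hg_p hψ_conj, zpowBy_pow_eq_one hψ hg_p⟩

end Equiv.Perm

theorem ZMod.intCast_pow_div_eq_one {p a : ℕ} [Fact p.Prime] {e : ℤ} (hpa : p ∣ a)
    (hpe : (p : ℤ) ∣ e ^ a - 1) : (e : ZMod p) ^ (a / p) = 1 := by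
  obtain ⟨m, rfl⟩ := hpa
  rw [← ZMod.intCast_zmod_eq_zero_iff_dvd, Int.cast_sub, sub_eq_zero] at hpe
  push_cast at hpe
  rwa [Nat.mul_div_cancel_left _ (Fact.out : p.Prime).pos, ← ZMod.pow_card (_ ^ m), ← pow_mul,
    mul_comm]

theorem stmt_11_general (n : ℕ) (e : ℤ)
    (α : Equiv.Perm (Fin n)) (a : ℕ)
    (ha : a ∈ α.cycleType)
    (d : ℕ) (hd : d = Int.gcd (a : ℤ) (e ^ a - 1)) (hd1 : d ≠ 1) :
    ∃ y : Equiv.Perm (Fin n), y ≠ 1 ∧ α * y * α⁻¹ = y ^ e ∧ y ^ d = 1 := by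
  obtain ⟨c, hcα, hca⟩ : ∃ c ∈ α.cycleFactorsFinset, c.support.card = a := by
    simpa [Equiv.Perm.cycleType_def] using ha
  have : Fact d.minFac.Prime := ⟨Nat.minFac_prime hd1⟩
  have hpd : d.minFac ∣ d := Nat.minFac_dvd d
  have hpa : d.minFac ∣ a := hpd.trans (Int.natCast_dvd_natCast.1 (hd ▸ Int.gcd_dvd_left ..))
  have hpe : (d.minFac : ℤ) ∣ e ^ a - 1 :=
    (Int.natCast_dvd_natCast.2 hpd).trans (hd ▸ Int.gcd_dvd_right ..)
  obtain ⟨y, hy1, hαy, hyp⟩ := Equiv.Perm.exists_conj_eq_zpow_of_mem_cycleFactorsFinset hcα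
    (hca.trans (Nat.mul_div_cancel' hpa).symm) (ZMod.intCast_pow_div_eq_one hpa hpe)
  exact ⟨y, hy1, hαy, orderOf_dvd_iff_pow_eq_one.1 ((orderOf_dvd_of_pow_eq_one hyp).trans hpd)⟩

/-- Corollary 2.10: if `α ∈ Sₙ` has a cycle of length `a` for some
`2 ≤ a ≤ n` with `d = gcd(a, e ^ a - 1) ≠ 1`, then `(e*α)` has a non-trivial solution
`y ≠ 1` with `y ^ d = 1`. -/
theorem stmt_11 (n : ℕ) (e : ℤ) (he : e ∉ ({-1, 0, 1} : Set ℤ))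
    (α : Equiv.Perm (Fin n)) (a : ℕ) (ha2 : 2 ≤ a) (han : a ≤ n)
    (ha : a ∈ α.cycleType)
    (d : ℕ) (hd : d = Int.gcd (a : ℤ) (e ^ a - 1)) (hd1 : d ≠ 1) :
    ∃ y : Equiv.Perm (Fin n), y ≠ 1 ∧ α * y * α⁻¹ = y ^ e ∧ y ^ d = 1 :=
  stmt_11_general n e α a ha d hd hd1
end

section
/- Let n ≥ 3, let e be an integer with e ∉ {−1, 0, 1}, and let p be a prime divisor of n such that p divides e^(n/p) − 1 (as integers) and gcd(n/p, eⁿ − 1) = 1. Let α ∈ Sₙ be a cyclic permutation of length n. Then the power conjugate equation (e*α) has a non-trivial solution, and for every non-trivial solution y ≠ 1 of (e*α): y^p = 1, and every solution z ∈ Sₙ of (e*α) is of the form z = y^k for some 1 ≤ k ≤ p; that is, the solutions of (e*α) are exactly the p distinct powers y, y², …, y^(p−1), y^p = 1. -/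
/-!
Conjugating by a suitable isomorphism, `α` becomes the translation `x ↦ x + 1` of `ZMod n`; put
`m = n / p`. Conjugation by the translation sends a solution `σ` to `σ ^ e`, so translations
permute the cycles of `σ`: the cycle of `0` is a subgroup `H` and the cycles are its cosets.
The order of `H` divides `n = m * p` and the order of `σ`, which divides `e ^ n - 1` and is
therefore prime to `m`; hence `σ ^ p = 1` and all displacements `σ x - x` lie in the subgroup
generated by `m`, of order `p`. Since `e ^ m ≡ 1 [ZMOD p]`, `σ` commutes with translation by `m`,
and the displacement `d x = σ x - x` satisfies `d (x - 1) = e • d x`. So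
`σ x = x + e ^ (-x) • σ 0`, which makes `σ` a power of the solution `y x = x + e ^ (-x) • m`.
-/

open Equiv Equiv.Perm Subgroup Function

section PowConj

variable {G : Type*} [Group G]

def powConjSolutions (a : G) (e : ℤ) : Set G := {y | a * y * a⁻¹ = y ^ e}

variable {a z : G} {e : ℤ}

theorem zpow_mem_powConjSolutions (hz : z ∈ powConjSolutions a e) (j : ℤ) :
    z ^ j ∈ powConjSolutions a e := by
  change a * z * a⁻¹ = z ^ e at hz
  change a * z ^ j * a⁻¹ = (z ^ j) ^ e
  rw [← conj_zpow, hz, ← zpow_mul, ← zpow_mul, mul_comm]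

theorem pow_conj_eq_zpow_pow (hz : z ∈ powConjSolutions a e) (k : ℕ) :
    a ^ k * z * (a ^ k)⁻¹ = z ^ e ^ k := by
  induction k with
  | zero => simp
  | succ k ih =>
    calc a ^ (k + 1) * z * (a ^ (k + 1))⁻¹ = a ^ k * (a * z * a⁻¹) * (a ^ k)⁻¹ := by group
      _ = (a ^ k * z * (a ^ k)⁻¹) ^ e := by rw [hz, conj_zpow]
      _ = z ^ e ^ (k + 1) := by rw [ih, ← zpow_mul, pow_succ]

theorem orderOf_dvd_pow_sub_one (hz : z ∈ powConjSolutions a e) {n : ℕ} (ha : a ^ n = 1) :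
    (orderOf z : ℤ) ∣ e ^ n - 1 := by
  rw [orderOf_dvd_iff_zpow_eq_one, zpow_sub_one, ← pow_conj_eq_zpow_pow hz, ha]
  simp

theorem preimage_powConjSolutions {H : Type*} [Group H] (f : G ≃* H) (a : G) (e : ℤ) :
    f ⁻¹' powConjSolutions (f a) e = powConjSolutions a e := by
  ext y
  simp [powConjSolutions, ← map_mul, ← map_inv, ← map_zpow, f.injective.eq_iff]

end PowConj

section PrimeOrder

variable {G : Type*} [Group G] {p : ℕ} {x y : G}

theorem orderOf_eq_and_zpowers_eq_of_mem_zpowers (hp : p.Prime) (hx : orderOf x = p)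
    (hy : y ∈ zpowers x) (hy1 : y ≠ 1) : orderOf y = p ∧ zpowers y = zpowers x := by
  have hyp : orderOf y = p := by
    have := orderOf_dvd_of_mem_zpowers hy
    rw [hx] at this
    exact (hp.eq_one_or_self_of_dvd _ this).resolve_left (by simpa using hy1)
  have : Finite (zpowers x) := (orderOf_pos_iff.mp (hx ▸ hp.pos)).finite_zpowers.to_subtype
  refine ⟨hyp, eq_of_le_of_card_ge (zpowers_le.mpr hy) ?_⟩
  rw [Nat.card_zpowers, Nat.card_zpowers, hx, hyp]

theorem pow_ne_pow_of_orderOf_eq (hy : orderOf y = p) {i j : ℕ} (hi : 1 ≤ i) (hij : i < j)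
    (hjp : j ≤ p) : y ^ i ≠ y ^ j := by
  rw [Ne, pow_eq_pow_iff_modEq, hy]
  intro h
  have := Nat.le_of_dvd (by omega) ((Nat.modEq_iff_dvd' hij.le).mp h)
  omega

theorem exists_pow_eq_of_mem_zpowers (hp : 0 < p) (hy : orderOf y = p) (hx : x ∈ zpowers y) :
    ∃ k, 1 ≤ k ∧ k ≤ p ∧ x = y ^ k := by
  obtain ⟨k, rfl⟩ := (orderOf_pos_iff.mp (hy ▸ hp)).mem_powers_iff_mem_zpowers.mpr hx
  dsimp only
  rw [← pow_mod_orderOf, hy]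
  rcases Nat.eq_zero_or_pos (k % p) with h | h
  · exact ⟨p, hp, le_rfl, by rw [h, pow_zero, ← hy, pow_orderOf_eq_one]⟩
  · exact ⟨k % p, h, (Nat.mod_lt k hp).le, rfl⟩

end PrimeOrder

section Displacement

variable {A : Type*} [AddCommGroup A] (T : AddSubgroup A)

theorem zpow_apply_eq_add_zsmul {σ : Perm A} (hσ : ∀ x, σ x - x ∈ T)
    (hcomm : ∀ x, ∀ t ∈ T, σ (x + t) = σ x + t) (j : ℤ) (x : A) :
    (σ ^ j) x = x + j • (σ x - x) := by
  induction j using Int.induction_on with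
  | zero => simp
  | succ i ih =>
    rw [add_comm, zpow_one_add, mul_apply, ih, hcomm _ _ (zsmul_mem (hσ x) i), add_smul,
      one_smul]
    abel
  | pred i ih =>
    apply σ.injective
    rw [← mul_apply, ← zpow_one_add, add_sub_cancel, ih, add_comm x,
      hcomm _ _ (zsmul_mem (hσ x) _), sub_smul, one_smul]
    abel

def displacementPerm (δ : A → A) (hδ : ∀ x, δ x ∈ T)
    (hper : ∀ x, ∀ t ∈ T, δ (x + t) = δ x) : Perm A where
  toFun x := x + δ x
  invFun x := x - δ x
  left_inv x := by simp only [hper x _ (hδ x), add_sub_cancel_right]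
  right_inv x := by
    simp only [sub_eq_add_neg, hper x _ (neg_mem (hδ x)), neg_add_cancel_right]

theorem zpow_displacementPerm_apply (δ : A → A) (hδ : ∀ x, δ x ∈ T)
    (hper : ∀ x, ∀ t ∈ T, δ (x + t) = δ x) (j : ℤ) (x : A) :
    (displacementPerm T δ hδ hper ^ j) x = x + j • δ x := by
  have happly (x : A) : displacementPerm T δ hδ hper x = x + δ x := rfl
  rw [zpow_apply_eq_add_zsmul T (fun x => ?_) (fun x t ht => ?_), happly, add_sub_cancel_left]
  · rw [happly, add_sub_cancel_left]
    exact hδ x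
  · rw [happly, happly, hper x t ht]
    abel

end Displacement

section TranslationInvariantCycles

variable {A : Type*} [AddCommGroup A]

def HasTranslationInvariantCycles (σ : Perm A) : Prop :=
  ∀ a x y, σ.SameCycle x y → σ.SameCycle (x + a) (y + a)

variable {σ : Perm A}

theorem HasTranslationInvariantCycles.sameCycle_iff (hσ : HasTranslationInvariantCycles σ)
    {x y : A} : σ.SameCycle x y ↔ σ.SameCycle 0 (y - x) := by
  refine ⟨fun h => ?_, fun h => ?_⟩
  · simpa [sub_eq_add_neg] using hσ (-x) x y h
  · simpa using hσ x 0 (y - x) h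

theorem HasTranslationInvariantCycles.eq_one_of_apply_zero
    (hσ : HasTranslationInvariantCycles σ) (h0 : σ 0 = 0) : σ = 1 := by
  ext x
  have := (hσ.sameCycle_iff.mp (SameCycle.refl σ x).apply_right).eq_of_left h0
  rw [one_apply, ← sub_eq_zero, ← this]

theorem HasTranslationInvariantCycles.exists_addSubgroup [Finite A]
    (hσ : HasTranslationInvariantCycles σ) :
    ∃ H : AddSubgroup A, Nat.card H = minimalPeriod σ 0 ∧ ∀ x, σ x - x ∈ H := by
  classical
  let H : AddSubgroup A :=
    { carrier := {y | σ.SameCycle 0 y}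
      add_mem' := fun {x y} hx hy => hx.trans (by simpa [add_comm] using hσ x 0 y hy)
      zero_mem' := SameCycle.refl _ _
      neg_mem' := fun {x} hx => by simpa using (hσ (-x) 0 x hx).symm }
  have hH : (H : Set A) = MulAction.orbit (zpowers σ) 0 := by
    ext y
    simp [H, MulAction.mem_orbit_iff, SameCycle, Subgroup.exists_zpowers]
    rfl
  have := Fintype.ofFinite A
  refine ⟨H, ?_, fun x => hσ.sameCycle_iff.mp (SameCycle.refl σ x).apply_right⟩
  rw [← SetLike.coe_sort_coe, hH, Nat.card_eq_fintype_card, ← MulAction.minimalPeriod_eq_card]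
  rfl

end TranslationInvariantCycles

section ZModArithmetic

variable {n m p : ℕ} {e : ℤ}

theorem pow_zsmul_natCast_eq_of_modEq (hmp : m * p = n) (hdvd : (p : ℤ) ∣ e ^ m - 1) {a b : ℕ}
    (h : a ≡ b [MOD m]) : e ^ a • (m : ZMod n) = e ^ b • (m : ZMod n) := by
  have hpow : (e : ZMod p) ^ a = (e : ZMod p) ^ b := by
    have he : (e : ZMod p) ^ m = 1 := by
      rw [← sub_eq_zero]
      exact_mod_cast (ZMod.intCast_zmod_eq_zero_iff_dvd _ p).mpr hdvd
    rw [pow_eq_pow_mod a he, pow_eq_pow_mod b he, h]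
  obtain ⟨k, hk⟩ := (ZMod.intCast_eq_intCast_iff_dvd_sub _ _ p).mp (by exact_mod_cast hpow.symm)
  have hn : ((m * p : ℕ) : ZMod n) = 0 := by rw [hmp, ZMod.natCast_self]
  rw [zsmul_eq_mul, zsmul_eq_mul, ← sub_eq_zero, ← sub_mul]
  push_cast at hn ⊢
  have hk' : (e : ZMod n) ^ a - (e : ZMod n) ^ b = p * k := by
    exact_mod_cast congrArg (Int.cast : ℤ → ZMod n) hk
  linear_combination (m : ZMod n) * hk' + (k : ZMod n) * hn

variable [NeZero n]

theorem mem_zmultiples_of_nsmul_eq_zero (hmp : m * p = n) (hp : 0 < p) {w : ZMod n}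
    (h : p • w = 0) : w ∈ AddSubgroup.zmultiples (m : ZMod n) := by
  have hn : n ∣ p * w.val := by
    rw [← ZMod.natCast_eq_zero_iff, Nat.cast_mul, ZMod.natCast_zmod_val, ← nsmul_eq_mul, h]
  obtain ⟨t, ht⟩ : m ∣ w.val := Nat.dvd_of_mul_dvd_mul_left hp (by rwa [mul_comm p m, hmp])
  exact ⟨t, by rw [← ZMod.natCast_zmod_val w, ht]; simp [mul_comm]⟩

theorem val_modEq_of_sub_mem_zmultiples (hmn : m ∣ n) {a b : ZMod n}
    (h : a - b ∈ AddSubgroup.zmultiples (m : ZMod n)) : a.val ≡ b.val [MOD m] := by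
  rw [← ZMod.natCast_eq_natCast_iff, ← ZMod.cast_eq_val, ← ZMod.cast_eq_val, ← sub_eq_zero]
  change ZMod.castHom hmn (ZMod m) a - ZMod.castHom hmn (ZMod m) b = 0
  rw [← map_sub]
  obtain ⟨k, hk⟩ := h
  rw [← hk, map_zsmul, map_natCast, ZMod.natCast_self, smul_zero]

theorem eq_pow_val_neg_zsmul {A : Type*} [AddCommGroup A] {f : ZMod n → A}
    (hf : ∀ x, f (x - 1) = e • f x) (x : ZMod n) : f x = e ^ (-x).val • f 0 := by
  suffices h : ∀ k : ℕ, f (-k) = e ^ k • f 0 by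
    rw [← h, ZMod.natCast_zmod_val, neg_neg]
  intro k
  induction k with
  | zero => simp
  | succ k ih => rw [Nat.cast_succ, neg_add, ← sub_eq_add_neg, hf, ih, smul_smul, pow_succ']

end ZModArithmetic

section TranslationSolutions

variable {n m p : ℕ} {e : ℤ}

theorem conj_addRight_apply {A : Type*} [AddGroup A] (a : A) (σ : Perm A) (x : A) :
    (Equiv.addRight a * σ * (Equiv.addRight a)⁻¹) x = σ (x - a) + a := by
  simp [sub_eq_add_neg]

theorem addRight_one_pow (k : ℕ) :
    Equiv.addRight (1 : ZMod n) ^ k = Equiv.addRight (k : ZMod n) := by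
  rw [nsmul_addRight, nsmul_one]

variable {σ : Perm (ZMod n)}

theorem apply_add_of_mem_zmultiples (hdvd : (p : ℤ) ∣ e ^ m - 1)
    (hσ : σ ∈ powConjSolutions (Equiv.addRight 1) e) (hσp : σ ^ p = 1) (x : ZMod n) :
    ∀ t ∈ AddSubgroup.zmultiples (m : ZMod n), σ (x + t) = σ x + t := by
  have hfix : σ ^ e ^ m = σ := by
    obtain ⟨k, hk⟩ := hdvd
    rw [← sub_add_cancel (e ^ m) 1, zpow_add_one, hk, zpow_mul, zpow_natCast, hσp, one_zpow,
      one_mul]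
  have hcomm : Commute (Equiv.addRight (m : ZMod n)) σ := by
    have := pow_conj_eq_zpow_pow hσ m
    rw [hfix, addRight_one_pow] at this
    exact mul_inv_eq_iff_eq_mul.mp this
  rintro t ⟨k, rfl⟩
  simpa [zsmul_addRight] using congrArg (· x) (hcomm.symm.zpow_right k).eq

variable [NeZero n]

theorem hasTranslationInvariantCycles_of_mem_powConjSolutions
    (hσ : σ ∈ powConjSolutions (Equiv.addRight 1) e) : HasTranslationInvariantCycles σ := by
  intro a x y h
  have := h.conj (g := Equiv.addRight (1 : ZMod n) ^ a.val)
  rw [pow_conj_eq_zpow_pow hσ, addRight_one_pow, ZMod.natCast_zmod_val] at this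
  exact this.of_zpow

theorem pow_eq_one_and_nsmul_sub_eq_zero (hmp : m * p = n)
    (hgcd : Int.gcd m (e ^ n - 1) = 1) (hσ : σ ∈ powConjSolutions (Equiv.addRight 1) e) :
    σ ^ p = 1 ∧ ∀ x, p • (σ x - x) = 0 := by
  obtain ⟨H, hcard, hmem⟩ :=
    (hasTranslationInvariantCycles_of_mem_powConjSolutions hσ).exists_addSubgroup
  have hord : (orderOf σ : ℤ) ∣ e ^ n - 1 :=
    orderOf_dvd_pow_sub_one hσ (by rw [addRight_one_pow, ZMod.natCast_self, addRight_zero])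
  have hper : minimalPeriod σ 0 ∣ orderOf σ := IsPeriodicPt.minimalPeriod_dvd <| by
    rw [IsPeriodicPt, IsFixedPt, ← coe_pow, pow_orderOf_eq_one, one_apply]
  have hcop : Nat.Coprime (Nat.card H) m := by
    refine Nat.Coprime.coprime_dvd_left (hcard ▸ hper.trans (Int.natCast_dvd.mp hord)) ?_
    simpa [Nat.coprime_comm, Int.gcd] using hgcd
  have hHp : Nat.card H ∣ p := by
    refine hcop.dvd_of_dvd_mul_left ?_
    have := AddSubgroup.card_addSubgroup_dvd_card H
    rw [Nat.card_zmod] at this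
    rwa [hmp]
  refine ⟨?_, fun x => ?_⟩
  · refine (hasTranslationInvariantCycles_of_mem_powConjSolutions
      (by simpa using zpow_mem_powConjSolutions hσ p)).eq_one_of_apply_zero ?_
    rw [Perm.coe_pow]
    exact (isPeriodicPt_minimalPeriod σ 0).trans_dvd (hcard ▸ hHp)
  · have := addOrderOf_dvd_natCard (⟨σ x - x, hmem x⟩ : H)
    rw [← AddSubgroup.addOrderOf_coe] at this
    exact addOrderOf_dvd_iff_nsmul_eq_zero.mp (this.trans hHp)

-- `(-x).val` stands for the exponent `-x`: only its class mod `m` matters, because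
-- `e ^ m ≡ 1 [ZMOD p]` and `p • m = 0`.
theorem exists_zpow_apply_eq_add_zsmul (hmp : m * p = n) (hdvd : (p : ℤ) ∣ e ^ m - 1) :
    ∃ y : Perm (ZMod n), ∀ (j : ℤ) (x : ZMod n),
      (y ^ j) x = x + j • e ^ (-x).val • (m : ZMod n) := by
  refine ⟨displacementPerm (AddSubgroup.zmultiples (m : ZMod n))
    (fun x => e ^ (-x).val • (m : ZMod n)) (fun x => zsmul_mem (AddSubgroup.mem_zmultiples _) _)
    (fun x t ht => ?_), zpow_displacementPerm_apply _ _ _ _⟩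
  refine pow_zsmul_natCast_eq_of_modEq hmp hdvd
    (val_modEq_of_sub_mem_zmultiples ⟨p, hmp.symm⟩ ?_)
  simpa using neg_mem ht

theorem mem_powConjSolutions_of_zpow_apply (hmp : m * p = n) (hdvd : (p : ℤ) ∣ e ^ m - 1)
    {y : Perm (ZMod n)}
    (hy : ∀ (j : ℤ) (x : ZMod n), (y ^ j) x = x + j • e ^ (-x).val • (m : ZMod n)) :
    y ∈ powConjSolutions (Equiv.addRight 1) e := by
  show Equiv.addRight 1 * y * (Equiv.addRight 1)⁻¹ = y ^ e
  ext x
  have h1 := hy 1 (x - 1)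
  rw [zpow_one] at h1
  rw [conj_addRight_apply, h1, hy, one_smul, smul_smul, ← pow_succ',
    pow_zsmul_natCast_eq_of_modEq hmp hdvd (b := (-x).val + 1)]
  · abel
  · refine Nat.ModEq.of_dvd ⟨p, hmp.symm⟩ ?_
    rw [← ZMod.natCast_eq_natCast_iff]
    push_cast
    rw [ZMod.natCast_zmod_val, ZMod.natCast_zmod_val]
    ring

theorem apply_eq_add_pow_val_neg_zsmul (hmp : m * p = n) (hp : 0 < p)
    (hdvd : (p : ℤ) ∣ e ^ m - 1) (hgcd : Int.gcd m (e ^ n - 1) = 1)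
    (hσ : σ ∈ powConjSolutions (Equiv.addRight 1) e) (x : ZMod n) :
    σ x = x + e ^ (-x).val • σ 0 := by
  obtain ⟨hσp, htors⟩ := pow_eq_one_and_nsmul_sub_eq_zero hmp hgcd hσ
  have hT x := mem_zmultiples_of_nsmul_eq_zero hmp hp (htors x)
  have hcomm := apply_add_of_mem_zmultiples hdvd hσ hσp
  have hrec x : σ (x - 1) - (x - 1) = e • (σ x - x) := by
    have := congrArg (· x) hσ
    rw [conj_addRight_apply, zpow_apply_eq_add_zsmul _ hT hcomm] at this
    rw [← add_sub_cancel_left x (e • (σ x - x)), ← this]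
    abel
  have := eq_pow_val_neg_zsmul (f := fun x => σ x - x) hrec x
  rwa [sub_zero, sub_eq_iff_eq_add'] at this

theorem exists_powConjSolutions_eq_zpowers (hmp : m * p = n) (hp : p.Prime)
    (hdvd : (p : ℤ) ∣ e ^ m - 1) (hgcd : Int.gcd m (e ^ n - 1) = 1) :
    ∃ y : Perm (ZMod n), orderOf y = p ∧
      powConjSolutions (Equiv.addRight (1 : ZMod n)) e = zpowers y := by
  have := Fact.mk hp
  obtain ⟨y, hy⟩ := exists_zpow_apply_eq_add_zsmul hmp hdvd
  have hsol := mem_powConjSolutions_of_zpow_apply hmp hdvd hy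
  refine ⟨y, orderOf_eq_prime (pow_eq_one_and_nsmul_sub_eq_zero hmp hgcd hsol).1 ?_,
    Set.ext fun σ => ⟨fun hσ => ?_, ?_⟩⟩
  · intro h
    have hm : (m : ZMod n) = 0 := by simpa [h, eq_comm] using hy 1 0
    have hm0 : 0 < m := Nat.pos_of_ne_zero fun h0 => NeZero.ne n (by simp [← hmp, h0])
    have := Nat.le_of_dvd hm0 ((ZMod.natCast_eq_zero_iff m n).mp hm)
    nlinarith [hp.two_le]
  · obtain ⟨k, hk⟩ := mem_zmultiples_of_nsmul_eq_zero hmp hp.pos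
      (by simpa using (pow_eq_one_and_nsmul_sub_eq_zero hmp hgcd hσ).2 0)
    refine ⟨k, Perm.ext fun x => ?_⟩
    rw [hy, apply_eq_add_pow_val_neg_zsmul hmp hp.pos hdvd hgcd hσ x, ← hk, smul_comm]
  · rintro ⟨k, rfl⟩
    exact zpow_mem_powConjSolutions hsol k

end TranslationSolutions

theorem Equiv.Perm.IsCycle.exists_mulEquiv_apply_eq_addRight_one {n : ℕ} {α : Perm (Fin n)}
    (hα : α.IsCycle) (hcard : α.support.card = n) :
    ∃ Ψ : Perm (Fin n) ≃* Perm (ZMod n), Ψ α = Equiv.addRight 1 := by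
  obtain ⟨k, rfl⟩ : ∃ k, n = k + 2 := ⟨n - 2, by have := hα.two_le_card_support; omega⟩
  obtain ⟨g, hg⟩ := _root_.isConj_iff.mp (hα.isConj isCycle_finRotate
    (by rw [hcard, support_finRotate, Finset.card_univ, Fintype.card_fin]))
  refine ⟨(MulAut.conj g).trans (ZMod.finEquiv (k + 2)).toEquiv.permCongrHom, ?_⟩
  ext x
  simp [hg]

theorem stmt_12_general (n : ℕ) (e : ℤ)
    (p : ℕ) (hp : p.Prime) (hpn : p ∣ n)
    (hdvd : (p : ℤ) ∣ e ^ (n / p) - 1)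
    (hgcd : Int.gcd ((n / p : ℕ) : ℤ) (e ^ n - 1) = 1)
    (α : Equiv.Perm (Fin n)) (hα : α.IsCycle) (hcard : α.support.card = n) :
    (∃ y : Equiv.Perm (Fin n), y ≠ 1 ∧ α * y * α⁻¹ = y ^ e) ∧
    ∀ y : Equiv.Perm (Fin n), y ≠ 1 → α * y * α⁻¹ = y ^ e →
      y ^ p = 1 ∧
      (∀ i j : ℕ, 1 ≤ i → i < j → j ≤ p → y ^ i ≠ y ^ j) ∧
      (∀ z : Equiv.Perm (Fin n), α * z * α⁻¹ = z ^ e →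
        ∃ k : ℕ, 1 ≤ k ∧ k ≤ p ∧ z = y ^ k) := by
  have : NeZero n := ⟨by rintro rfl; simp at hgcd⟩
  obtain ⟨y, hyp, hS⟩ :=
    exists_powConjSolutions_eq_zpowers (Nat.div_mul_cancel hpn) hp hdvd hgcd
  obtain ⟨Ψ, hΨ⟩ := hα.exists_mulEquiv_apply_eq_addRight_one hcard
  have hSα : powConjSolutions α e = zpowers (Ψ.symm y) := by
    rw [← preimage_powConjSolutions Ψ, hΨ, hS]
    ext w
    simp [mem_zpowers_iff, ← map_zpow, MulEquiv.symm_apply_eq]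
  have hsol w : α * w * α⁻¹ = w ^ e ↔ w ∈ zpowers (Ψ.symm y) := Set.ext_iff.mp hSα w
  have hy : orderOf (Ψ.symm y) = p := by rw [MulEquiv.orderOf_eq, hyp]
  refine ⟨⟨Ψ.symm y, fun h => hp.one_lt.ne' (by rw [← hy, h, orderOf_one]),
    (hsol _).mpr (mem_zpowers _)⟩, fun z hz1 hz => ?_⟩
  obtain ⟨hzp, hzeq⟩ := orderOf_eq_and_zpowers_eq_of_mem_zpowers hp hy ((hsol z).mp hz) hz1
  exact ⟨hzp ▸ pow_orderOf_eq_one z, fun _ _ => pow_ne_pow_of_orderOf_eq hzp,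
    fun w hw => exists_pow_eq_of_mem_zpowers hp.pos hzp (hzeq ▸ (hsol w).mp hw)⟩

/-- Theorem 2.11: let `p` be a prime divisor of `n` with
`p ∣ e^(n/p) - 1` and `gcd(n/p, e^n - 1) = 1`, and let `α ∈ Sₙ` be cyclic of length
`n ≥ 3`. Then `(e*α)` has a non-trivial solution and for every non-trivial solution
`y`: `y ^ p = 1`, the powers `y, y², …, y^p` are distinct, and every solution equals
`y ^ k` for some `1 ≤ k ≤ p`. -/
theorem stmt_12 (n : ℕ) (hn : 3 ≤ n) (e : ℤ) (he : e ∉ ({-1, 0, 1} : Set ℤ))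
    (p : ℕ) (hp : p.Prime) (hpn : p ∣ n)
    (hdvd : (p : ℤ) ∣ e ^ (n / p) - 1)
    (hgcd : Int.gcd ((n / p : ℕ) : ℤ) (e ^ n - 1) = 1)
    (α : Equiv.Perm (Fin n)) (hα : α.IsCycle) (hcard : α.support.card = n) :
    (∃ y : Equiv.Perm (Fin n), y ≠ 1 ∧ α * y * α⁻¹ = y ^ e) ∧
    ∀ y : Equiv.Perm (Fin n), y ≠ 1 → α * y * α⁻¹ = y ^ e →
      y ^ p = 1 ∧
      (∀ i j : ℕ, 1 ≤ i → i < j → j ≤ p → y ^ i ≠ y ^ j) ∧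
      (∀ z : Equiv.Perm (Fin n), α * z * α⁻¹ = z ^ e →
        ∃ k : ℕ, 1 ≤ k ∧ k ≤ p ∧ z = y ^ k) :=
  stmt_12_general n e p hp hpn hdvd hgcd α hα hcard
end

section
/- Let e be an integer with e ∉ {−1, 0, 1}, and let α ∈ Sₙ be a permutation without fixed points (g₁ = 0, i.e. α.support is all of Fin n), with order w = orderOf α. Assume that for every choice of integers r ≥ 2 and d ≥ 2 satisfying gcd(e − 1, r) = 1, r ∣ eʷ − 1 (as integers), d ∣ w, and d·r ∈ F_d(α), one has g_d = 0 (α has no cycle of length d) and gcd(e^d − 1, r) = 1. If y ∈ Sₙ is a solution of the power conjugate equation (e*α) such that gcd(e − 1, s) = 1 for every cycle length s ≥ 2 of y, then y = 1. -/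
/-!
Conjugation by `α` acts on `⟨y⟩` as `y ↦ y ^ e`, and `e` is prime to the order of `y`, which
divides `e ^ w - 1`; so `α` permutes the cycles of `y`, preserving their lengths. If `y ≠ 1`,
take a cycle `S` of `y` of length `r ≥ 2` and let `d` be the length of its orbit under `α`. The
union of that orbit has `d * r` points, is `α`-invariant, and all `α`-cycles in it have length
divisible by `d`; hence `d * r ∈ F_d(α)` and `gcd(e ^ d - 1, r) = 1` (for `d = 1` this is the
hypothesis on the cycle lengths of `y`). Writing `α ^ d x = y ^ c x`, a solution `k` of
`(e ^ d - 1) k ≡ -c (mod r)` makes `y ^ k x ∈ S` a fixed point of `α ^ d`, so `α` has a cycle of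
length exactly `d`: impossible for `d = 1` as `α` has no fixed points, and excluded by
`g_d = 0` for `d ≥ 2`.
-/

open Finset Pointwise

section ConjEqZPow

variable {G : Type*} [Group G] {a b : G} {e : ℤ}

theorem conj_pow_eq_zpow_pow (h : a * b * a⁻¹ = b ^ e) (m : ℕ) :
    a ^ m * b * (a ^ m)⁻¹ = b ^ (e ^ m) := by
  induction m with
  | zero => simp
  | succ m ih =>
    rw [pow_succ', mul_inv_rev,
      show a * a ^ m * b * ((a ^ m)⁻¹ * a⁻¹) = a * (a ^ m * b * (a ^ m)⁻¹) * a⁻¹ by group, ih,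
      ← conj_zpow, h, ← zpow_mul, pow_succ']

theorem orderOf_dvd_pow_orderOf_sub_one (h : a * b * a⁻¹ = b ^ e) :
    (orderOf b : ℤ) ∣ e ^ orderOf a - 1 := by
  have hb : b ^ (e ^ orderOf a) = b := by
    simpa [pow_orderOf_eq_one] using (conj_pow_eq_zpow_pow h (orderOf a)).symm
  rw [orderOf_dvd_iff_zpow_eq_one, zpow_sub, hb, zpow_one, mul_inv_cancel]

theorem isCoprime_orderOf_of_conj_eq_zpow (h : a * b * a⁻¹ = b ^ e) (ha : IsOfFinOrder a) :
    IsCoprime e (orderOf b) := by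
  have hpos := ha.orderOf_pos
  have hcop : IsCoprime e (e ^ orderOf a - 1) :=
    ⟨e ^ (orderOf a - 1), -1, by rw [← pow_succ, Nat.sub_add_cancel hpos]; ring⟩
  exact hcop.of_isCoprime_of_dvd_right (orderOf_dvd_pow_orderOf_sub_one h)

end ConjEqZPow

namespace Equiv.Perm

variable {β : Type*}

theorem sameCycle_zpow_iff_of_isCoprime {f : Perm β} {k : ℤ} (hk : IsCoprime k (orderOf f))
    {x z : β} : (f ^ k).SameCycle x z ↔ f.SameCycle x z := by
  refine ⟨SameCycle.of_zpow, fun ⟨j, hj⟩ => ?_⟩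
  obtain ⟨u, v, huv⟩ := hk
  have hf : (f ^ k) ^ u = f := by
    rw [← zpow_mul]
    conv_rhs => rw [← zpow_one f]
    rw [zpow_eq_zpow_iff_modEq, Int.modEq_iff_dvd]
    exact ⟨v, by linarith⟩
  exact ⟨u * j, by rw [zpow_mul, hf, hj]⟩

theorem apply_zpow_apply_of_conj_eq_zpow {g y : Perm β} {a : ℤ} (h : g * y * g⁻¹ = y ^ a)
    (k : ℤ) (x : β) : g ((y ^ k) x) = (y ^ (a * k)) (g x) := by
  rw [zpow_mul, ← h, conj_zpow]
  simp [mul_apply]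

theorem pow_apply_eq_self_iff_period_dvd {f : Perm β} {x : β} {k : ℕ} :
    (f ^ k) x = x ↔ MulAction.period f x ∣ k :=
  MulAction.pow_smul_eq_iff_period_dvd (m := f) (a := x)

theorem zpow_apply_eq_self_iff_period_dvd {f : Perm β} {x : β} {k : ℤ} :
    (f ^ k) x = x ↔ (MulAction.period f x : ℤ) ∣ k :=
  MulAction.zpow_smul_eq_iff_period_dvd (g := f) (a := x)

theorem exists_zpow_apply_eq_self_of_conj_eq_zpow {g y : Perm β} {a : ℤ} {x : β}
    (hg : g * y * g⁻¹ = y ^ a) (hx : y.SameCycle x (g x))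
    (ha : Int.gcd (a - 1) (MulAction.period y x) = 1) :
    ∃ k : ℤ, g ((y ^ k) x) = (y ^ k) x := by
  obtain ⟨c, hc⟩ := hx
  obtain ⟨u, v, huv⟩ := Int.isCoprime_iff_gcd_eq_one.mpr ha
  set k := -c * u
  have hfix : (y ^ ((a - 1) * k + c)) x = x :=
    zpow_apply_eq_self_iff_period_dvd.mpr ⟨c * v, by linear_combination (-c) * huv⟩
  refine ⟨k, ?_⟩
  calc g ((y ^ k) x) = (y ^ (a * k)) ((y ^ c) x) := by
        rw [apply_zpow_apply_of_conj_eq_zpow hg, hc]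
    _ = (y ^ k) ((y ^ ((a - 1) * k + c)) x) := by
        rw [← mul_apply, ← mul_apply, ← zpow_add, ← zpow_add]
        ring_nf
    _ = (y ^ k) x := by rw [hfix]

variable [Fintype β] [DecidableEq β]

theorem period_eq_card_support_cycleOf {f : Perm β} {x : β} (hx : f x ≠ x) :
    MulAction.period f x = #(f.cycleOf x).support := by
  have hc : (f.cycleOf x).IsCycle := f.isCycle_cycleOf hx
  rw [← hc.orderOf]
  apply Nat.dvd_antisymm
  · rw [← pow_apply_eq_self_iff_period_dvd, ← cycleOf_pow_apply_self, pow_orderOf_eq_one,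
      one_apply]
  · apply orderOf_dvd_of_pow_eq_one
    rw [hc.pow_eq_one_iff' (x := x) (by rwa [cycleOf_apply_self]), cycleOf_pow_apply_self,
      pow_apply_eq_self_iff_period_dvd]

theorem period_mem_cycleType {f : Perm β} {x : β} (hx : f x ≠ x) :
    MulAction.period f x ∈ f.cycleType := by
  rw [period_eq_card_support_cycleOf hx, cycleType_def]
  exact Multiset.mem_map_of_mem _ (cycleOf_mem_cycleFactorsFinset_iff.mpr (mem_support.mpr hx))

/-- Unlike `(y.cycleOf x).support`, this is `{x}` rather than `∅` when `y` fixes `x`, so these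
classes partition `β`. -/
def sameCycleClass (y : Perm β) (x : β) : Finset β := {z | y.SameCycle x z}

@[simp]
theorem mem_sameCycleClass {y : Perm β} {x z : β} :
    z ∈ sameCycleClass y x ↔ y.SameCycle x z := by
  simp [sameCycleClass]

theorem sameCycleClass_eq_of_not_disjoint {y : Perm β} {a b : β}
    (h : ¬_root_.Disjoint (sameCycleClass y a) (sameCycleClass y b)) :
    sameCycleClass y a = sameCycleClass y b := by
  obtain ⟨z, hza, hzb⟩ := not_disjoint_iff.mp h
  have hab : y.SameCycle a b :=
    (mem_sameCycleClass.mp hza).trans (mem_sameCycleClass.mp hzb).symm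
  ext t
  simp only [mem_sameCycleClass]
  exact ⟨hab.symm.trans, hab.trans⟩

theorem card_sameCycleClass {y : Perm β} {x : β} (hx : y x ≠ x) :
    #(sameCycleClass y x) = MulAction.period y x := by
  rw [period_eq_card_support_cycleOf hx]
  congr 1
  ext z
  rw [mem_sameCycleClass, mem_support_cycleOf_iff' hx]

theorem smul_sameCycleClass {g y : Perm β} {k : ℤ} (hg : g * y * g⁻¹ = y ^ k)
    (hk : IsCoprime k (orderOf y)) (x : β) :
    g • sameCycleClass y x = sameCycleClass y (g x) := by
  ext z
  rw [← inv_smul_mem_iff, mem_sameCycleClass, mem_sameCycleClass, Perm.smul_def,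
    ← sameCycle_zpow_iff_of_isCoprime hk (x := g x), ← hg, sameCycle_conj]
  simp

theorem exists_le_cycleType_sum_eq_card {f : Perm β} {U : Finset β} (hU : ∀ z ∈ U, f z ∈ U)
    (hUs : U ⊆ f.support) :
    ∃ M ≤ f.cycleType, M.sum = #U ∧ ∀ j ∈ M, ∃ z ∈ U, MulAction.period f z = j := by
  set C := f.cycleFactorsFinset.filter (·.support ⊆ U)
  have hpow : ∀ z ∈ U, ∀ i : ℕ, (f ^ i) z ∈ U := by
    intro z hz i
    induction i with
    | zero => exact hz
    | succ i ih => rw [pow_succ', mul_apply]; exact hU _ ih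
  have hUC : U = C.biUnion support := by
    ext z
    simp only [C, mem_biUnion, mem_filter]
    refine ⟨fun hz => ⟨f.cycleOf z, ⟨cycleOf_mem_cycleFactorsFinset_iff.mpr (hUs hz), ?_⟩,
      mem_support_cycleOf_iff.mpr ⟨SameCycle.refl _ _, hUs hz⟩⟩, fun ⟨c, ⟨_, hcU⟩, hzc⟩ => hcU hzc⟩
    intro t ht
    obtain ⟨i, -, rfl⟩ := (mem_support_cycleOf_iff.mp ht).1.exists_pow_eq'
    exact hpow z hz i
  refine ⟨C.val.map (#·.support), ?_, ?_, ?_⟩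
  · rw [cycleType_def]
    exact Multiset.map_le_map (Multiset.filter_le _ _)
  · rw [hUC, card_biUnion]
    · rfl
    · intro c hc c' hc' hne
      exact (cycleFactorsFinset_pairwise_disjoint f (mem_filter.mp hc).1 (mem_filter.mp hc').1
        hne).disjoint_support
  · simp only [Multiset.mem_map, forall_exists_index, and_imp]
    rintro _ c hc rfl
    obtain ⟨hcf, hcU⟩ := mem_filter.mp hc
    obtain ⟨z, hz⟩ := (mem_cycleFactorsFinset_iff.mp hcf).1.nonempty_support
    refine ⟨z, hcU hz, ?_⟩
    rw [period_eq_card_support_cycleOf (mem_support.mp (hUs (hcU hz))),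
      ← cycle_is_cycleOf hz hcf]

noncomputable def orbitUnion (α : Perm β) (s : Finset β) : Finset β :=
  (range (MulAction.period α s)).biUnion fun i => (α ^ i) • s

theorem mem_orbitUnion {α : Perm β} {s : Finset β} {z : β} :
    z ∈ orbitUnion α s ↔ ∃ m : ℕ, z ∈ (α ^ m) • s := by
  simp only [orbitUnion, mem_biUnion, mem_range]
  refine ⟨fun ⟨i, _, hi⟩ => ⟨i, hi⟩, fun ⟨m, hm⟩ => ⟨m % MulAction.period α s,
    Nat.mod_lt _ (MulAction.period_pos_of_orderOf_pos (orderOf_pos α) s), ?_⟩⟩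
  rwa [MulAction.pow_mod_period_smul]

theorem apply_mem_orbitUnion {α : Perm β} {s : Finset β} {z : β} (hz : z ∈ orbitUnion α s) :
    α z ∈ orbitUnion α s := by
  obtain ⟨m, hm⟩ := mem_orbitUnion.mp hz
  exact mem_orbitUnion.mpr ⟨m + 1, by rw [pow_succ', mul_smul]; exact smul_mem_smul_finset hm⟩

theorem subset_orbitUnion (α : Perm β) (s : Finset β) : s ⊆ orbitUnion α s :=
  fun z hz => mem_orbitUnion.mpr ⟨0, by simpa using hz⟩

section CycleOrbit

variable {α y : Perm β} {e : ℤ}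

theorem pow_smul_sameCycleClass (hy : α * y * α⁻¹ = y ^ e) (he : IsCoprime e (orderOf y))
    (m : ℕ) (x : β) : (α ^ m) • sameCycleClass y x = sameCycleClass y ((α ^ m) x) :=
  smul_sameCycleClass (conj_pow_eq_zpow_pow hy m) he.pow_left x

theorem period_sameCycleClass_dvd_of_not_disjoint (hy : α * y * α⁻¹ = y ^ e)
    (he : IsCoprime e (orderOf y)) {x : β} {i l : ℕ}
    (h : ¬_root_.Disjoint ((α ^ i) • sameCycleClass y x) ((α ^ (i + l)) • sameCycleClass y x)) :
    MulAction.period α (sameCycleClass y x) ∣ l := by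
  rw [pow_smul_sameCycleClass hy he, pow_smul_sameCycleClass hy he] at h
  have heq := sameCycleClass_eq_of_not_disjoint h
  rw [← pow_smul_sameCycleClass hy he, ← pow_smul_sameCycleClass hy he, pow_add, mul_smul,
    smul_left_cancel_iff] at heq
  exact MulAction.pow_smul_eq_iff_period_dvd.mp heq.symm

theorem card_orbitUnion_sameCycleClass (hy : α * y * α⁻¹ = y ^ e)
    (he : IsCoprime e (orderOf y)) (x : β) :
    #(orbitUnion α (sameCycleClass y x)) =
      MulAction.period α (sameCycleClass y x) * #(sameCycleClass y x) := by
  rw [orbitUnion, card_biUnion, sum_const_nat fun i _ => card_smul_finset _ _, card_range]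
  intro i hi j hj hij
  wlog hlt : i < j generalizing i j
  · exact (this hj hi hij.symm (by omega)).symm
  by_contra h
  have hdvd := period_sameCycleClass_dvd_of_not_disjoint hy he (i := i) (l := j - i)
    (by rwa [Nat.add_sub_cancel' hlt.le])
  have := Nat.le_of_dvd (by omega) hdvd
  simp only [coe_range, Set.mem_Iio] at hj
  omega

theorem dvd_period_of_mem_orbitUnion (hy : α * y * α⁻¹ = y ^ e) (he : IsCoprime e (orderOf y))
    {x z : β} (hz : z ∈ orbitUnion α (sameCycleClass y x)) :
    MulAction.period α (sameCycleClass y x) ∣ MulAction.period α z := by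
  obtain ⟨m, hm⟩ := mem_orbitUnion.mp hz
  refine period_sameCycleClass_dvd_of_not_disjoint hy he (i := m)
    (not_disjoint_iff.mpr ⟨z, hm, ?_⟩)
  have := smul_mem_smul_finset (a := α ^ MulAction.period α z) hm
  rwa [MulAction.pow_period_smul, ← mul_smul, ← pow_add, add_comm] at this

theorem exists_mem_sameCycleClass_pow_period_apply_eq_self (hy : α * y * α⁻¹ = y ^ e) {x : β}
    (hgcd : Int.gcd (e ^ MulAction.period α (sameCycleClass y x) - 1) (MulAction.period y x) = 1) :
    ∃ z ∈ sameCycleClass y x, (α ^ MulAction.period α (sameCycleClass y x)) z = z := by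
  set d := MulAction.period α (sameCycleClass y x)
  have hx : y.SameCycle x ((α ^ d) x) := by
    have := smul_mem_smul_finset (a := α ^ d) (mem_sameCycleClass.mpr (SameCycle.refl y x))
    rwa [MulAction.pow_period_smul, mem_sameCycleClass] at this
  obtain ⟨k, hk⟩ := exists_zpow_apply_eq_self_of_conj_eq_zpow (conj_pow_eq_zpow_pow hy d) hx hgcd
  exact ⟨(y ^ k) x, mem_sameCycleClass.mpr ⟨k, rfl⟩, hk⟩

theorem period_sameCycleClass_mem_cycleType (hy : α * y * α⁻¹ = y ^ e)
    (he : IsCoprime e (orderOf y)) (hα : α.support = univ) {x : β}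
    (hgcd : Int.gcd (e ^ MulAction.period α (sameCycleClass y x) - 1) (MulAction.period y x) = 1) :
    MulAction.period α (sameCycleClass y x) ∈ α.cycleType := by
  obtain ⟨z, hzS, hz⟩ := exists_mem_sameCycleClass_pow_period_apply_eq_self hy hgcd
  have hzd : MulAction.period α z = MulAction.period α (sameCycleClass y x) :=
    Nat.dvd_antisymm (pow_apply_eq_self_iff_period_dvd.mp hz)
      (dvd_period_of_mem_orbitUnion hy he (subset_orbitUnion α _ hzS))
  exact hzd ▸ period_mem_cycleType (mem_support.mp (hα ▸ mem_univ z))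

end CycleOrbit

end Equiv.Perm

open Equiv.Perm

theorem sum_mem_dRange_s13 {n d : ℕ} {α : Equiv.Perm (Fin n)} {M : Multiset ℕ}
    (hM : M ≤ α.cycleType) (hd : ∀ j ∈ M, d ∣ j) : M.sum ∈ dRange α d := by
  refine ⟨M.count, fun j => ?_, fun j hj => Multiset.count_eq_zero.mpr fun h => hj (hd j h), ?_⟩
  · have hle := Multiset.count_le_of_le j hM
    show M.count j ≤ cycleCount α j
    unfold cycleCount
    split_ifs with h1
    · subst h1
      have : α.cycleType.count 1 = 0 :=
        Multiset.count_eq_zero.mpr fun h => by have := two_le_of_mem_cycleType h; omega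
      omega
    · exact hle
  · rw [sum_multiset_count_of_subset M (range (n + 1))]
    · simp only [smul_eq_mul, mul_comm]
    · intro j hj
      have h1 := le_card_support_of_mem_cycleType
        (Multiset.mem_of_le hM (Multiset.mem_toFinset.mp hj))
      have h2 := card_le_univ α.support
      simp only [Fintype.card_fin] at h2
      exact mem_range.mpr (by omega)

theorem card_mem_dRange_s13 {n d : ℕ} {α : Equiv.Perm (Fin n)} {U : Finset (Fin n)}
    (hU : ∀ z ∈ U, α z ∈ U) (hUs : U ⊆ α.support) (hd : ∀ z ∈ U, d ∣ MulAction.period α z) :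
    #U ∈ dRange α d := by
  obtain ⟨M, hM, hsum, hlen⟩ := exists_le_cycleType_sum_eq_card hU hUs
  rw [← hsum]
  refine sum_mem_dRange_s13 hM fun j hj => ?_
  obtain ⟨z, hz, rfl⟩ := hlen j hj
  exact hd z hz

theorem period_mul_period_mem_dRange {n : ℕ} {α y : Equiv.Perm (Fin n)} {e : ℤ}
    (hy : α * y * α⁻¹ = y ^ e) (he : IsCoprime e (orderOf y)) (hα : α.support = univ)
    {x : Fin n} (hx : y x ≠ x) :
    MulAction.period α (sameCycleClass y x) * MulAction.period y x ∈
      dRange α (MulAction.period α (sameCycleClass y x)) := by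
  rw [← card_sameCycleClass hx, ← card_orbitUnion_sameCycleClass hy he]
  exact card_mem_dRange_s13 (fun _ => apply_mem_orbitUnion) (hα ▸ subset_univ _)
    (fun _ => dvd_period_of_mem_orbitUnion hy he)

theorem stmt_13_general (n : ℕ) (e : ℤ)
    (α : Equiv.Perm (Fin n)) (hfix : α.support = Finset.univ)
    (w : ℕ) (hw : w = orderOf α)
    (hyp : ∀ r d : ℕ, 2 ≤ r → 2 ≤ d →
      Int.gcd (e - 1) (r : ℤ) = 1 → ((r : ℤ) ∣ e ^ w - 1) → d ∣ w →
      d * r ∈ dRange α d →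
      cycleCount α d = 0 ∧ Int.gcd (e ^ d - 1) (r : ℤ) = 1)
    (y : Equiv.Perm (Fin n)) (hy : α * y * α⁻¹ = y ^ e)
    (hcyc : ∀ s ∈ y.cycleType, Int.gcd (e - 1) (s : ℤ) = 1) :
    y = 1 := by
  subst hw
  by_contra hne
  obtain ⟨x, hx⟩ : ∃ x, y x ≠ x := by simpa [Equiv.ext_iff] using hne
  have he := isCoprime_orderOf_of_conj_eq_zpow hy (isOfFinOrder_of_finite α)
  set d := MulAction.period α (sameCycleClass y x)
  set r := MulAction.period y x
  have hr : r ∈ y.cycleType := period_mem_cycleType hx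
  have hyp_r : 2 ≤ d → cycleCount α d = 0 ∧ Int.gcd (e ^ d - 1) r = 1 := fun hd =>
    hyp r d (two_le_of_mem_cycleType hr) hd (hcyc r hr)
      ((Int.natCast_dvd_natCast.mpr (MulAction.period_dvd_orderOf y x)).trans
        (orderOf_dvd_pow_orderOf_sub_one hy))
      (MulAction.period_dvd_orderOf α _) (period_mul_period_mem_dRange hy he hfix hx)
  have hgcd : Int.gcd (e ^ d - 1) r = 1 := by
    rcases (by omega : d ≤ 1 ∨ 2 ≤ d) with hd | hd
    · have : d = 1 := le_antisymm hd (MulAction.period_pos_of_orderOf_pos (orderOf_pos α) _)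
      simpa [this] using hcyc r hr
    · exact (hyp_r hd).2
  have hd : d ∈ α.cycleType := period_sameCycleClass_mem_cycleType hy he hfix hgcd
  have hd2 := two_le_of_mem_cycleType hd
  have hcount := (hyp_r hd2).1
  rw [cycleCount, if_neg (by omega)] at hcount
  exact Multiset.count_ne_zero.mpr hd hcount

/-- Theorem 2.12: let `α ∈ Sₙ` have no fixed points and order `w`.
Assume for all `r ≥ 2`, `d ≥ 2` with `gcd(e - 1, r) = 1`, `r ∣ e ^ w - 1`, `d ∣ w` and
`d·r ∈ F_d(α)` that `α` has no cycle of length `d` and `gcd(e ^ d - 1, r) = 1`. If `y`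
solves `(e*α)` and `gcd(e - 1, s) = 1` for every cycle length `s` of `y`, then
`y = 1`. -/
theorem stmt_13 (n : ℕ) (e : ℤ) (he : e ∉ ({-1, 0, 1} : Set ℤ))
    (α : Equiv.Perm (Fin n)) (hfix : α.support = Finset.univ)
    (w : ℕ) (hw : w = orderOf α)
    (hyp : ∀ r d : ℕ, 2 ≤ r → 2 ≤ d →
      Int.gcd (e - 1) (r : ℤ) = 1 → ((r : ℤ) ∣ e ^ w - 1) → d ∣ w →
      d * r ∈ dRange α d →
      cycleCount α d = 0 ∧ Int.gcd (e ^ d - 1) (r : ℤ) = 1)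
    (y : Equiv.Perm (Fin n)) (hy : α * y * α⁻¹ = y ^ e)
    (hcyc : ∀ s ∈ y.cycleType, Int.gcd (e - 1) (s : ℤ) = 1) :
    y = 1 :=
  stmt_13_general n e α hfix w hw hyp y hy hcyc
end

section
/- Let e be an integer with e ∉ {−1, 0, 1}, let 2 ≤ a < b be integers such that a does not divide b, set n = a + b, and assume gcd(u, eᵘ − 1) = 1 (gcd in ℤ) for each u ∈ {a, b, a + b}. Let α ∈ Sₙ be a product of two disjoint cycles of lengths a and b covering all n points (i.e. α.cycleType = {a, b}). Then the only solution of the power conjugate equation (e*α) is the trivial one, y = 1. -/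
/-!
Let `O` be the `⟨y⟩`-orbit of a point `z` and `k` the least `k > 0` with `αᵏ • O = O`.
Since `α` normalises `⟨y⟩`, every translate `αʲ • O` is again a `⟨y⟩`-orbit, so each cycle `S`
of `α` meeting `O` is the disjoint union of the `k` sets `αʲ • O ∩ S`: `|S| = k * |O ∩ S|`.

If `O` lies in one cycle of `α`, of length `u ∈ {a, b}`, then `|O| ∣ u`; moreover `αᵘ` fixes
`z` and `y z`, so `y z = y ^ (eᵘ) z` and `|O| ∣ eᵘ - 1`. The gcd hypothesis forces `|O| = 1`.

Otherwise `O` meets both cycles `S_a`, `S_b` of `α`, and `a = k * p`, `b = k * q`, `|O| = p + q`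
with `p = |O ∩ S_a|`, `q = |O ∩ S_b|`.
As `b ∤ a`, `O ∩ S_a` is the fixed-point set of `αᵃ` on `O`; for `w` in it,
`αᵃ (yʲ w) = y ^ (j * eᵃ) w` shows that this set is an orbit of a power of `y`, so its size `p`
divides `|O|`. Hence `p ∣ q` and `a ∣ b`.
-/

open Finset MulAction Function Pointwise

namespace Equiv.Perm

variable {β : Type*}

theorem zpow_apply_eq_zpow_apply_iff {f : Perm β} {x : β} {i j : ℤ} :
    (f ^ i) x = (f ^ j) x ↔ (period f x : ℤ) ∣ i - j := by
  rw [← zpow_smul_eq_iff_period_dvd, sub_eq_neg_add, zpow_add, mul_smul, zpow_neg,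
    inv_smul_eq_iff, Perm.smul_def, Perm.smul_def]

section conj

variable {α y : Perm β} {e : ℤ}

theorem pow_mul_zpow_mul_inv_pow (h : α * y * α⁻¹ = y ^ e) (k : ℕ) (i : ℤ) :
    α ^ k * y ^ i * (α ^ k)⁻¹ = y ^ (i * e ^ k) := by
  induction k with
  | zero => simp
  | succ k ih =>
    rw [pow_succ', mul_inv_rev, show α * α ^ k * y ^ i * ((α ^ k)⁻¹ * α⁻¹)
      = α * (α ^ k * y ^ i * (α ^ k)⁻¹) * α⁻¹ by group, ih, ← conj_zpow, h, ← zpow_mul,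
      pow_succ]
    congr 1
    ring

theorem pow_apply_zpow_apply (h : α * y * α⁻¹ = y ^ e) (k : ℕ) (i : ℤ) (w : β) :
    (α ^ k) ((y ^ i) w) = (y ^ (i * e ^ k)) ((α ^ k) w) := by
  simp [← pow_mul_zpow_mul_inv_pow h k i, mul_apply]

theorem SameCycle.pow_apply_of_conj (h : α * y * α⁻¹ = y ^ e) (k : ℕ) {v w : β}
    (hvw : y.SameCycle v w) : y.SameCycle ((α ^ k) v) ((α ^ k) w) := by
  obtain ⟨i, rfl⟩ := hvw
  exact ⟨i * e ^ k, (pow_apply_zpow_apply h k i v).symm⟩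

theorem pow_apply_zpow_apply_eq_self_iff (h : α * y * α⁻¹ = y ^ e) {m : ℕ} {w : β}
    (hw : (α ^ m) w = w) (j : ℤ) :
    (α ^ m) ((y ^ j) w) = (y ^ j) w ↔ (period (y ^ (e ^ m - 1)) w : ℤ) ∣ j := by
  rw [pow_apply_zpow_apply h, hw, zpow_apply_eq_zpow_apply_iff,
    ← zpow_smul_eq_iff_period_dvd (g := y ^ (e ^ m - 1)), ← zpow_mul,
    zpow_smul_eq_iff_period_dvd, show j * e ^ m - j = (e ^ m - 1) * j by ring]

end conj

variable [Fintype β] [DecidableEq β]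

def orbitFinset (f : Perm β) (x : β) : Finset β := {v | f.SameCycle x v}

section orbitFinset

variable {f : Perm β} {x v : β}

@[simp]
theorem mem_orbitFinset : v ∈ f.orbitFinset x ↔ f.SameCycle x v := by
  simp [orbitFinset]

theorem mem_orbitFinset_self (f : Perm β) (x : β) : x ∈ f.orbitFinset x :=
  mem_orbitFinset.2 (SameCycle.refl f x)

theorem orbitFinset_eq_of_mem (hv : v ∈ f.orbitFinset x) :
    f.orbitFinset v = f.orbitFinset x := by
  ext u
  simp only [mem_orbitFinset] at hv ⊢
  exact ⟨hv.trans, hv.symm.trans⟩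

theorem orbitFinset_eq_or_disjoint (f : Perm β) (x y : β) :
    f.orbitFinset x = f.orbitFinset y ∨ _root_.Disjoint (f.orbitFinset x) (f.orbitFinset y) := by
  by_cases hxy : f.SameCycle y x
  · exact Or.inl (orbitFinset_eq_of_mem (mem_orbitFinset.2 hxy))
  · refine Or.inr (disjoint_left.2 fun u hx hy => hxy ?_)
    exact (mem_orbitFinset.1 hy).trans (mem_orbitFinset.1 hx).symm

theorem card_orbitFinset (f : Perm β) (x : β) : (f.orbitFinset x).card = period f x := by
  classical
  rw [period_eq_minimalPeriod, minimalPeriod_eq_card, ← Set.toFinset_card]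
  congr 1
  ext v
  rw [Set.mem_toFinset, mem_orbitFinset, MulAction.mem_orbit_iff]
  constructor
  · rintro ⟨i, rfl⟩
    exact ⟨⟨f ^ i, i, rfl⟩, rfl⟩
  · rintro ⟨⟨_, i, rfl⟩, rfl⟩
    exact ⟨i, rfl⟩

theorem pow_card_orbitFinset_apply (hv : v ∈ f.orbitFinset x) :
    (f ^ (f.orbitFinset x).card) v = v := by
  rw [← orbitFinset_eq_of_mem hv, card_orbitFinset, ← Perm.smul_def, pow_period_smul]

theorem pow_smul_orbitFinset_self (f : Perm β) (i : ℕ) (x : β) :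
    f ^ i • f.orbitFinset x = f.orbitFinset x := by
  ext u
  rw [← inv_smul_mem_iff, mem_orbitFinset, mem_orbitFinset, Perm.smul_def, ← zpow_natCast,
    ← zpow_neg, sameCycle_zpow_right]

theorem card_orbitFinset_eq_period_mul_card_inter {O : Finset β}
    (hO : ∀ i j : ℕ, f ^ i • O = f ^ j • O ∨ _root_.Disjoint (f ^ i • O) (f ^ j • O))
    (hx : x ∈ O) : (f.orbitFinset x).card = period f O * (O ∩ f.orbitFinset x).card := by
  set S := f.orbitFinset x
  set k := period f O
  have hcover : S = (range k).biUnion fun j => f ^ j • O ∩ S := by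
    ext v
    simp only [mem_biUnion, mem_range, mem_inter]
    refine ⟨fun hv => ?_, fun ⟨_, _, _, hv⟩ => hv⟩
    obtain ⟨i, rfl⟩ := (mem_orbitFinset.1 hv).exists_nat_pow_eq
    refine ⟨i % k, Nat.mod_lt _ (period_pos_of_orderOf_pos (orderOf_pos f) O), ?_, hv⟩
    rw [pow_mod_period_smul]
    exact smul_mem_smul_finset hx
  have hdisj : (range k : Set ℕ).PairwiseDisjoint fun j => f ^ j • O ∩ S := by
    intro i hi j hj hij
    refine ((hO i j).resolve_left fun hij' => hij ?_).mono inter_subset_left inter_subset_left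
    rw [← smul_iterate_apply, ← smul_iterate_apply] at hij'
    exact (iterate_eq_iterate_iff_of_lt_minimalPeriod (mem_range.1 hi) (mem_range.1 hj)).1 hij'
  have hcard (j : ℕ) : (f ^ j • O ∩ S).card = (O ∩ S).card := by
    have hS : f ^ j • S = S := pow_smul_orbitFinset_self f j x
    conv_lhs => rw [← hS, ← smul_finset_inter, card_smul_finset]
  rw [congrArg card hcover, card_biUnion hdisj, sum_congr rfl fun j _ => hcard j, sum_const,
    card_range, smul_eq_mul]

end orbitFinset

section conjOrbit

variable {α y : Perm β} {e : ℤ}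

theorem pow_smul_orbitFinset (h : α * y * α⁻¹ = y ^ e) (k : ℕ) (v : β) :
    α ^ k • y.orbitFinset v = y.orbitFinset ((α ^ k) v) := by
  obtain ⟨m, hm⟩ : ∃ m : ℕ, α ^ m = (α ^ k)⁻¹ :=
    mem_powers_iff_mem_zpowers.2 (inv_mem (pow_mem (Subgroup.mem_zpowers α) k))
  ext u
  rw [← inv_smul_mem_iff, mem_orbitFinset, mem_orbitFinset, Perm.smul_def]
  constructor
  · simpa using SameCycle.pow_apply_of_conj h k (w := (α ^ k)⁻¹ u)
  · intro hu
    simpa [hm] using SameCycle.pow_apply_of_conj h m hu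

theorem pow_smul_orbitFinset_eq_or_disjoint (h : α * y * α⁻¹ = y ^ e) (v : β) (i j : ℕ) :
    α ^ i • y.orbitFinset v = α ^ j • y.orbitFinset v ∨
      _root_.Disjoint (α ^ i • y.orbitFinset v) (α ^ j • y.orbitFinset v) := by
  rw [pow_smul_orbitFinset h, pow_smul_orbitFinset h]
  exact orbitFinset_eq_or_disjoint y _ _

theorem period_dvd_card_orbitFinset (h : α * y * α⁻¹ = y ^ e) {z : β}
    (hsub : y.orbitFinset z ⊆ α.orbitFinset z) : period y z ∣ (α.orbitFinset z).card := by
  have := card_orbitFinset_eq_period_mul_card_inter (pow_smul_orbitFinset_eq_or_disjoint h z)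
    (mem_orbitFinset_self y z)
  rw [inter_eq_left.2 hsub, card_orbitFinset y z] at this
  exact Dvd.intro_left _ this.symm

theorem card_filter_pow_apply_eq_self_dvd (h : α * y * α⁻¹ = y ^ e) {m : ℕ} {w : β}
    (hw : (α ^ m) w = w) :
    ((y.orbitFinset w).filter fun v => (α ^ m) v = v).card ∣ period y w := by
  set ℓ := period (y ^ (e ^ m - 1)) w
  have hfix : ((y.orbitFinset w).filter fun v => (α ^ m) v = v) = (y ^ ℓ).orbitFinset w := by
    ext v
    simp only [mem_filter, mem_orbitFinset]
    constructor
    · rintro ⟨⟨j, rfl⟩, hj⟩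
      obtain ⟨t, rfl⟩ := (pow_apply_zpow_apply_eq_self_iff h hw j).1 hj
      exact ⟨t, by rw [← zpow_natCast, ← zpow_mul]⟩
    · rintro ⟨t, rfl⟩
      rw [← zpow_natCast, ← zpow_mul]
      exact ⟨⟨_, rfl⟩, (pow_apply_zpow_apply_eq_self_iff h hw _).2 (dvd_mul_right _ _)⟩
  rw [hfix, card_orbitFinset, ← pow_smul_eq_iff_period_dvd, ← pow_mul,
    pow_smul_eq_iff_period_dvd]
  exact dvd_mul_left _ _

theorem apply_eq_self_of_orbitFinset_subset (h : α * y * α⁻¹ = y ^ e) {z : β}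
    (hsub : y.orbitFinset z ⊆ α.orbitFinset z)
    (hgcd : Int.gcd (α.orbitFinset z).card (e ^ (α.orbitFinset z).card - 1) = 1) : y z = z := by
  set u := (α.orbitFinset z).card
  have hz : (α ^ u) z = z := pow_card_orbitFinset_apply (mem_orbitFinset_self α z)
  have hyz : (α ^ u) (y z) = y z :=
    pow_card_orbitFinset_apply (hsub (mem_orbitFinset.2 (SameCycle.refl y z).apply_right))
  have hdvd : (period y z : ℤ) ∣ e ^ u - 1 := by
    have := pow_apply_zpow_apply h u 1 z
    rw [one_mul, hz, zpow_one, hyz] at this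
    exact zpow_apply_eq_zpow_apply_iff.1 (by rw [zpow_one]; exact this.symm)
  have hperiod : period y z = 1 := by
    have := Int.dvd_gcd (Int.natCast_dvd_natCast.2 (period_dvd_card_orbitFinset h hsub)) hdvd
    rw [hgcd] at this
    exact Nat.dvd_one.1 (by exact_mod_cast this)
  exact period_eq_one_iff.1 hperiod

theorem card_orbitFinset_dvd_of_sameCycle (h : α * y * α⁻¹ = y ^ e) {x₁ x₂ w₁ w₂ : β}
    (hcover : ∀ v, v ∈ α.orbitFinset x₁ ∨ v ∈ α.orbitFinset x₂)
    (hlt : (α.orbitFinset x₁).card < (α.orbitFinset x₂).card)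
    (hw₁ : w₁ ∈ α.orbitFinset x₁) (hw₂ : w₂ ∈ α.orbitFinset x₂) (hw : y.SameCycle w₁ w₂) :
    (α.orbitFinset x₁).card ∣ (α.orbitFinset x₂).card := by
  rw [← orbitFinset_eq_of_mem hw₁, ← orbitFinset_eq_of_mem hw₂] at hcover hlt ⊢
  set S₁ := α.orbitFinset w₁
  set S₂ := α.orbitFinset w₂
  set O := y.orbitFinset w₁
  have hS : _root_.Disjoint S₁ S₂ :=
    (orbitFinset_eq_or_disjoint α w₁ w₂).resolve_left fun h => hlt.ne (congrArg card h)
  have ha : S₁.card = period α O * (O ∩ S₁).card :=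
    card_orbitFinset_eq_period_mul_card_inter (pow_smul_orbitFinset_eq_or_disjoint h w₁)
      (mem_orbitFinset_self y w₁)
  have hb : S₂.card = period α O * (O ∩ S₂).card :=
    card_orbitFinset_eq_period_mul_card_inter (pow_smul_orbitFinset_eq_or_disjoint h w₁)
      (mem_orbitFinset.2 hw)
  have hO : O.card = (O ∩ S₁).card + (O ∩ S₂).card := by
    rw [← card_union_of_disjoint (hS.mono inter_subset_right inter_subset_right),
      ← inter_union_distrib_left, eq_univ_of_forall fun v => mem_union.2 (hcover v), inter_univ]
  have hfix : O ∩ S₁ = O.filter fun v => (α ^ S₁.card) v = v := by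
    ext v
    rw [mem_inter, mem_filter]
    refine and_congr_right fun _ => ⟨pow_card_orbitFinset_apply, fun hv => ?_⟩
    refine (hcover v).resolve_right fun hv₂ => ?_
    have hperiod : S₂.card = period α v := by
      rw [← card_orbitFinset, orbitFinset_eq_of_mem hv₂]
    have : S₂.card ∣ S₁.card := by
      rwa [hperiod, ← pow_smul_eq_iff_period_dvd, Perm.smul_def]
    exact absurd (Nat.le_of_dvd (card_pos.2 ⟨w₁, mem_orbitFinset_self α w₁⟩) this) hlt.not_ge
  have hdvd : (O ∩ S₁).card ∣ (O ∩ S₁).card + (O ∩ S₂).card := by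
    rw [← hO, hfix, card_orbitFinset y w₁]
    exact card_filter_pow_apply_eq_self_dvd h
      (pow_card_orbitFinset_apply (mem_orbitFinset_self α w₁))
  rw [ha, hb]
  exact mul_dvd_mul_left _ ((Nat.dvd_add_right dvd_rfl).1 hdvd)

end conjOrbit

theorem exists_card_orbitFinset_eq_of_mem_cycleType {σ : Perm β} {m : ℕ}
    (hm : m ∈ σ.cycleType) : ∃ x, (σ.orbitFinset x).card = m := by
  rw [cycleType_def, Multiset.mem_map] at hm
  obtain ⟨c, hc, rfl⟩ := hm
  obtain ⟨x, hx⟩ := (mem_cycleFactorsFinset_iff.1 hc).1.nonempty_support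
  refine ⟨x, congrArg card ?_⟩
  rw [cycle_is_cycleOf hx hc]
  ext v
  rw [mem_orbitFinset,
    mem_support_cycleOf_iff' (mem_support.1 (mem_cycleFactorsFinset_support_le hc hx))]

theorem exists_orbitFinset_cover_of_cycleType_eq_pair {σ : Perm β} {a b : ℕ}
    (hσ : σ.cycleType = {a, b}) (hcard : Fintype.card β = a + b) (hab : a ≠ b) :
    ∃ x₁ x₂, (σ.orbitFinset x₁).card = a ∧ (σ.orbitFinset x₂).card = b ∧
      ∀ v, v ∈ σ.orbitFinset x₁ ∨ v ∈ σ.orbitFinset x₂ := by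
  obtain ⟨x₁, h₁⟩ := exists_card_orbitFinset_eq_of_mem_cycleType (m := a) (by rw [hσ]; simp)
  obtain ⟨x₂, h₂⟩ := exists_card_orbitFinset_eq_of_mem_cycleType (m := b) (by rw [hσ]; simp)
  have hdisj : _root_.Disjoint (σ.orbitFinset x₁) (σ.orbitFinset x₂) :=
    (orbitFinset_eq_or_disjoint σ x₁ x₂).resolve_left fun h => hab (h₁ ▸ h₂ ▸ congrArg card h)
  have huniv : σ.orbitFinset x₁ ∪ σ.orbitFinset x₂ = univ :=
    eq_univ_of_card _ (by rw [card_union_of_disjoint hdisj, h₁, h₂, hcard])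
  exact ⟨x₁, x₂, h₁, h₂, fun v => mem_union.1 (huniv ▸ mem_univ v)⟩

end Equiv.Perm

open Equiv.Perm

theorem stmt_14_general (e : ℤ)
    (a b : ℕ) (hab : a < b) (hnd : ¬ a ∣ b)
    (n : ℕ) (hn : n = a + b)
    (hgcd : ∀ u ∈ ({a, b, a + b} : Finset ℕ), Int.gcd (u : ℤ) (e ^ u - 1) = 1)
    (α : Equiv.Perm (Fin n)) (hα : α.cycleType = {a, b}) :
    ∀ y : Equiv.Perm (Fin n), α * y * α⁻¹ = y ^ e → y = 1 := by
  intro y hy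
  obtain ⟨x₁, x₂, h₁, h₂, hcover⟩ :=
    exists_orbitFinset_cover_of_cycleType_eq_pair hα (by simp [hn]) hab.ne
  refine Equiv.ext fun z => ?_
  by_cases hsub : y.orbitFinset z ⊆ α.orbitFinset z
  · refine apply_eq_self_of_orbitFinset_subset hy hsub (hgcd _ ?_)
    rcases hcover z with hz | hz <;> simp [orbitFinset_eq_of_mem hz, h₁, h₂]
  · obtain ⟨w, hw, hwz⟩ := not_subset.1 hsub
    rw [mem_orbitFinset] at hw hwz
    rw [← h₁, ← h₂] at hnd hab
    rcases hcover z with hz | hz <;> rcases hcover w with hw' | hw'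
    · exact absurd ((mem_orbitFinset.1 hz).symm.trans (mem_orbitFinset.1 hw')) hwz
    · exact absurd (card_orbitFinset_dvd_of_sameCycle hy hcover hab hz hw' hw) hnd
    · exact absurd (card_orbitFinset_dvd_of_sameCycle hy hcover hab hw' hz hw.symm) hnd
    · exact absurd ((mem_orbitFinset.1 hz).symm.trans (mem_orbitFinset.1 hw')) hwz

/-- Corollary 2.13: let `2 ≤ a < b` with `a ∤ b`, `n = a + b`, and
`gcd(u, e ^ u - 1) = 1` for each `u ∈ {a, b, a + b}`. If `α ∈ Sₙ` is a product of two
disjoint cycles of lengths `a, b` covering all points, then `(e*α)` has only the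
trivial solution `y = 1`. -/
theorem stmt_14 (e : ℤ) (he : e ∉ ({-1, 0, 1} : Set ℤ))
    (a b : ℕ) (ha : 2 ≤ a) (hab : a < b) (hnd : ¬ a ∣ b)
    (n : ℕ) (hn : n = a + b)
    (hgcd : ∀ u ∈ ({a, b, a + b} : Finset ℕ), Int.gcd (u : ℤ) (e ^ u - 1) = 1)
    (α : Equiv.Perm (Fin n)) (hα : α.cycleType = {a, b}) :
    ∀ y : Equiv.Perm (Fin n), α * y * α⁻¹ = y ^ e → y = 1 :=
  stmt_14_general e a b hab hnd n hn hgcd α hα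
end

section
/- Let e be an integer with e ∉ {−1, 0, 1}, and let α ∈ Sₙ be a permutation without fixed points (α.support is all of Fin n), with order w = orderOf α, such that any two distinct cycle lengths of α are coprime (for all a ≠ b in α.cycleType, gcd(a, b) = 1). Assume that for every cycle length a of α: (i) gcd(a, eᵃ − 1) = 1 (gcd in ℤ), and (ii) for every prime p with p ∣ eʷ − 1 and p ∤ e − 1 (divisibility in ℤ), the number of cycles of α of length a is at most p − 1. Then a permutation y ∈ Sₙ is a solution of the power conjugate equation (e*α) if and only if y^(e−1) = 1 (integer power) and α ∘ y = y ∘ α. -/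
/-!
Since `α` conjugates `y` to `y ^ e`, it also conjugates every `z ∈ ⟨y⟩` to `z ^ e`, so it suffices
to show `q ∣ e - 1` whenever such a `z` has prime power order `q = p ^ j`. Choose `x` whose
`⟨z⟩`-orbit `O` has size `q`, and let `t` be the least `k > 0` with `α ^ k x ∈ O`. In the
coordinates `u ↦ z ^ u x` on `O ≅ ℤ/q`, the permutation `α ^ t` acts on `O` as the affine map
`u ↦ e ^ t u + s`, and every `α`-cycle through `O` has length `t` times the length of the
corresponding orbit of that map.

If `p ∤ e ^ t - 1`, the affine map has a fixed point and a non-fixed point, so `α` has a cycle of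
length `t` and one whose length is a proper multiple of `t`, contradicting coprimality. If
`p ∣ e ^ t - 1`, every orbit of the affine map has length `1` or divisible by `p`. The latter
would give a cycle length `a` with `p ∣ a` and `p ∣ e ^ a - 1`. So the map is the identity and
`q ∣ e ^ t - 1 = (e - 1)(1 + e + ⋯ + e ^ (t - 1))`. When `p ∣ e - 1` the second factor is
`≡ t ≢ 0 (mod p)`, so `q ∣ e - 1`. When `p ∤ e - 1`, the `q` points of `O` lie in distinct
cycles of length `t`, against the multiplicity bound.
-/

open Equiv Finset MulAction

theorem dvd_geom_sum_iff_of_dvd_sub_one {R : Type*} [CommRing R] {p x : R} {n : ℕ}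
    (h : p ∣ x - 1) : p ∣ ∑ i ∈ range n, x ^ i ↔ p ∣ (n : R) := by
  simpa using dvd_geom_sum₂_iff_of_dvd_sub (n := n) h

theorem iterate_mul_add_sub {R : Type*} [CommRing R] (a b u : R) (k : ℕ) :
    (fun v => v * a + b)^[k] u - u = (∑ i ∈ range k, a ^ i) * ((a - 1) * u + b) := by
  induction k with
  | zero => simp
  | succ k ih =>
    rw [Function.iterate_succ_apply', geom_sum_succ]
    linear_combination a * ih

section

variable {R : Type*} [CommRing R] [IsDomain R] [IsBezout R]

theorem isCoprime_pow_geom_sum_of_dvd_sub_one {p x : R} {j k : ℕ} (hp : Prime p)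
    (h : p ∣ x - 1) (hk : ¬ p ∣ (k : R)) : IsCoprime (p ^ j) (∑ i ∈ range k, x ^ i) :=
  (hp.coprime_iff_not_dvd.2 (mt (dvd_geom_sum_iff_of_dvd_sub_one h).1 hk)).pow_left

theorem prime_pow_dvd_sub_one_of_dvd_pow_sub_one {p x : R} {j t : ℕ} (hp : Prime p)
    (h : p ^ j ∣ x ^ t - 1) (hpx : p ∣ x - 1) (hpt : ¬ p ∣ (t : R)) : p ^ j ∣ x - 1 := by
  rw [← geom_sum_mul] at h
  exact (isCoprime_pow_geom_sum_of_dvd_sub_one hp hpx hpt).dvd_of_dvd_mul_left h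

end

theorem SemiconjBy.pow_left_zpow {G : Type*} [Group G] {a b : G} {e : ℤ}
    (h : SemiconjBy a b (b ^ e)) (k : ℕ) (u : ℤ) :
    SemiconjBy (a ^ k) (b ^ u) (b ^ (u * e ^ k)) := by
  induction k generalizing u with
  | zero => simp
  | succ k ih =>
    have hu : SemiconjBy a (b ^ u) (b ^ (u * e)) := by
      simpa [← zpow_mul, mul_comm] using h.zpow_right u
    rw [pow_succ a, pow_succ' e, ← mul_assoc]
    exact (ih (u * e)).mul_left hu

namespace Equiv.Perm

variable {X : Type*}

theorem pow_apply_eq_self_iff_period_dvd_s15 {σ : Perm X} {P : X} {n : ℕ} :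
    (σ ^ n) P = P ↔ period σ P ∣ n := by
  rw [← pow_smul_eq_iff_period_dvd]
  rfl

theorem zpow_apply_eq_zpow_apply_iff_s15 {σ : Perm X} {P : X} {a b : ℤ} :
    (σ ^ a) P = (σ ^ b) P ↔ (period σ P : ℤ) ∣ a - b := by
  rw [← zpow_smul_eq_iff_period_dvd, sub_eq_neg_add, zpow_add, zpow_neg, mul_smul,
    inv_smul_eq_iff]
  rfl

theorem zpow_apply_eq_iff {σ : Perm X} {a b : ℤ} {P Q : X} :
    (σ ^ a) P = (σ ^ b) Q ↔ P = (σ ^ (b - a)) Q := by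
  rw [sub_eq_neg_add, zpow_add, zpow_neg, Perm.mul_apply, Perm.eq_inv_iff_eq]

theorem exists_period_eq_of_orderOf_eq_prime_pow {σ : Perm X} {p j : ℕ} (hp : p.Prime)
    (hσ : orderOf σ = p ^ (j + 1)) : ∃ P : X, period σ P = p ^ (j + 1) := by
  by_contra! hne
  have hfix : σ ^ p ^ j = 1 := by
    ext P
    obtain ⟨i, hi, hiP⟩ := (Nat.dvd_prime_pow hp).1 (hσ ▸ period_dvd_orderOf σ P)
    have hij : i ≤ j := by
      rcases hi.lt_or_eq with hi | rfl
      · omega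
      · exact absurd hiP (hne P)
    exact pow_apply_eq_self_iff_period_dvd_s15.2 (hiP ▸ Nat.pow_dvd_pow p hij)
  have := (Nat.pow_dvd_pow_iff_le_right hp.one_lt).1 (hσ ▸ orderOf_dvd_of_pow_eq_one hfix)
  omega

section CycleType

variable [Fintype X] [DecidableEq X]

theorem card_support_cycleOf_eq_period (σ : Perm X) {P : X} (hP : P ∈ σ.support) :
    #(σ.cycleOf P).support = period σ P := by
  have hPc : P ∈ (σ.cycleOf P).support := mem_support_cycleOf_iff.2 ⟨SameCycle.refl _ _, hP⟩
  have hcyc := fun n => (σ.isCycleOn_support_cycleOf P).pow_apply_eq hPc (n := n)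
  exact Nat.dvd_antisymm ((hcyc _).1 (pow_apply_eq_self_iff_period_dvd_s15.2 dvd_rfl))
    (pow_apply_eq_self_iff_period_dvd_s15.1 ((hcyc _).2 dvd_rfl))

theorem period_mem_cycleType_s15 {σ : Perm X} {P : X} (hP : P ∈ σ.support) :
    period σ P ∈ σ.cycleType := by
  rw [← card_support_cycleOf_eq_period σ hP, cycleType_def]
  exact Multiset.mem_map.2 ⟨_, cycleOf_mem_cycleFactorsFinset_iff.2 hP, rfl⟩

theorem card_le_count_cycleType {σ : Perm X} {s : Finset X} {a : ℕ} (ha : a ≠ 1)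
    (hperiod : ∀ P ∈ s, period σ P = a)
    (hcycle : (s : Set X).Pairwise fun P Q => ¬ σ.SameCycle P Q) :
    #s ≤ σ.cycleType.count a := by
  have hsupp : ∀ P ∈ s, P ∈ σ.support := fun P hP => by
    rw [mem_support, Ne, ← pow_one σ, pow_apply_eq_self_iff_period_dvd_s15, hperiod P hP,
      Nat.dvd_one]
    exact ha
  rw [cycleType_def, Multiset.count_map, ← Finset.filter_val, ← Finset.card_def]
  refine card_le_card_of_injOn σ.cycleOf (fun P hP => ?_) (fun P hP Q hQ hPQ => ?_)
  · simp only [coe_filter, Set.mem_ofPred_eq, Function.comp_apply]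
    exact ⟨cycleOf_mem_cycleFactorsFinset_iff.2 (hsupp P hP),
      (hperiod P hP) ▸ card_support_cycleOf_eq_period σ (hsupp P hP) |>.symm⟩
  · by_contra hne
    exact hcycle hP hQ hne
      ((sameCycle_iff_cycleOf_eq_of_mem_support (hsupp P hP) (hsupp Q hQ)).2 hPQ)

end CycleType

section ReturnTime

variable {α z : Perm X} {e : ℤ} {x : X} {t : ℕ}

theorem pow_apply_zpow_apply_s15 (h : SemiconjBy α z (z ^ e)) (k : ℕ) (u : ℤ) (P : X) :
    (α ^ k) ((z ^ u) P) = (z ^ (u * e ^ k)) ((α ^ k) P) := by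
  rw [← Perm.mul_apply, (h.pow_left_zpow k u).eq, Perm.mul_apply]

/-- When `α` normalises `⟨z⟩` it permutes the `⟨z⟩`-orbits, and `t` is the length of its cycle
through the orbit of `x`. -/
def IsReturnTime (α z : Perm X) (x : X) (t : ℕ) : Prop :=
  ∀ k : ℕ, (∃ u : ℤ, (α ^ k) x = (z ^ u) x) ↔ t ∣ k

theorem exists_isReturnTime [Finite X] (h : SemiconjBy α z (z ^ e)) (x : X) :
    ∃ t, IsReturnTime α z x t := by
  classical
  let R : ℕ → Prop := fun k => ∃ u : ℤ, (α ^ k) x = (z ^ u) x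
  have hadd : ∀ a b, R a → (R (b + a) ↔ R b) := by
    rintro a b ⟨u, hu⟩
    simp only [R, pow_add, Perm.mul_apply, hu, pow_apply_zpow_apply_s15 h, zpow_apply_eq_iff]
    exact ⟨fun ⟨v, hv⟩ => ⟨_, hv⟩, fun ⟨v, hv⟩ => ⟨v + u * e ^ b, by rwa [add_sub_cancel_right]⟩⟩
  have hmul : ∀ a m, R a → R (a * m) := by
    intro a m ha
    induction m with
    | zero => exact ⟨0, by simp⟩
    | succ m ih => exact (hadd a _ ha).2 ih
  have hex : ∃ k, 0 < k ∧ R k :=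
    ⟨orderOf α, (isOfFinOrder_of_finite α).orderOf_pos, 0, by simp [pow_orderOf_eq_one]⟩
  obtain ⟨htpos, htR⟩ := Nat.find_spec hex
  refine ⟨Nat.find hex, fun k => ⟨fun hk => ?_, fun ⟨m, hm⟩ => hm ▸ hmul _ m htR⟩⟩
  have hmod : R (k % Nat.find hex) :=
    (hadd _ _ (hmul _ (k / Nat.find hex) htR)).1 (by rwa [Nat.mod_add_div])
  by_contra hnd
  exact Nat.find_min hex (Nat.mod_lt k htpos)
    ⟨Nat.pos_of_ne_zero fun h0 => hnd (Nat.dvd_of_mod_eq_zero h0), hmod⟩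

theorem pow_mul_apply_zpow_apply (h : SemiconjBy α z (z ^ e)) {s : ℤ}
    (hs : (α ^ t) x = (z ^ s) x) (k : ℕ) (u : ℤ) :
    (α ^ (t * k)) ((z ^ u) x) = (z ^ ((fun v => v * e ^ t + s)^[k] u)) x := by
  induction k generalizing u with
  | zero => simp
  | succ k ih =>
    rw [mul_add, mul_one, pow_add, Perm.mul_apply, pow_apply_zpow_apply_s15 h, hs,
      ← Perm.mul_apply (z ^ _) (z ^ s), ← zpow_add, ih, Function.iterate_succ_apply]

theorem pow_mul_apply_zpow_apply_eq_self_iff (h : SemiconjBy α z (z ^ e)) {s : ℤ}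
    (hs : (α ^ t) x = (z ^ s) x) (k : ℕ) (u : ℤ) :
    (α ^ (t * k)) ((z ^ u) x) = (z ^ u) x ↔
      (period z x : ℤ) ∣ (∑ i ∈ range k, (e ^ t) ^ i) * ((e ^ t - 1) * u + s) := by
  rw [pow_mul_apply_zpow_apply h hs, zpow_apply_eq_zpow_apply_iff_s15, iterate_mul_add_sub]

theorem pow_apply_zpow_apply_eq_self_iff_s15 (h : SemiconjBy α z (z ^ e)) {s : ℤ}
    (hs : (α ^ t) x = (z ^ s) x) (u : ℤ) :
    (α ^ t) ((z ^ u) x) = (z ^ u) x ↔ (period z x : ℤ) ∣ (e ^ t - 1) * u + s := by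
  simpa using pow_mul_apply_zpow_apply_eq_self_iff h hs 1 u

namespace IsReturnTime

theorem dvd_of_pow_apply_eq (h : SemiconjBy α z (z ^ e)) (ht : IsReturnTime α z x t) {k : ℕ}
    {u v : ℤ} (hk : (α ^ k) ((z ^ u) x) = (z ^ v) x) : t ∣ k := by
  rw [pow_apply_zpow_apply_s15 h, zpow_apply_eq_iff] at hk
  exact (ht k).1 ⟨_, hk⟩

theorem dvd_period (h : SemiconjBy α z (z ^ e)) (ht : IsReturnTime α z x t) (u : ℤ) :
    t ∣ period α ((z ^ u) x) :=
  ht.dvd_of_pow_apply_eq h (pow_apply_eq_self_iff_period_dvd_s15.2 dvd_rfl)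

theorem period_eq_iff (h : SemiconjBy α z (z ^ e)) (ht : IsReturnTime α z x t) (u : ℤ) :
    period α ((z ^ u) x) = t ↔ (α ^ t) ((z ^ u) x) = (z ^ u) x := by
  rw [pow_apply_eq_self_iff_period_dvd_s15]
  exact ⟨fun h' => h' ▸ dvd_rfl, fun h' => Nat.dvd_antisymm h' (ht.dvd_period h u)⟩

theorem exists_period_eq_and_exists_period_ne (h : SemiconjBy α z (z ^ e))
    (ht : IsReturnTime α z x t) (hq : period z x ≠ 1)
    (hcop : IsCoprime (period z x : ℤ) (e ^ t - 1)) :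
    (∃ u : ℤ, period α ((z ^ u) x) = t) ∧ ∃ u : ℤ, period α ((z ^ u) x) ≠ t := by
  obtain ⟨s, hs⟩ := (ht t).2 dvd_rfl
  obtain ⟨a, b, hab⟩ := hcop
  simp only [ne_eq, ht.period_eq_iff h, pow_apply_zpow_apply_eq_self_iff_s15 h hs]
  refine ⟨⟨-(b * s), s * a, by linear_combination (-s) * hab⟩, b * (1 - s), fun hdvd => hq ?_⟩
  have h1 : (period z x : ℤ) ∣ 1 := by
    have h2 : (1 : ℤ) = (e ^ t - 1) * (b * (1 - s)) + s + period z x * ((1 - s) * a) := by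
      linear_combination (s - 1) * hab
    rw [h2]
    exact dvd_add hdvd (dvd_mul_right _ _)
  exact_mod_cast Int.eq_one_of_dvd_one (by positivity) h1

theorem period_eq_or_dvd_period (h : SemiconjBy α z (z ^ e)) (ht : IsReturnTime α z x t)
    {p j : ℕ} (hp : p.Prime) (hq : period z x = p ^ j) (hpE : (p : ℤ) ∣ e ^ t - 1) (u : ℤ) :
    period α ((z ^ u) x) = t ∨ p ∣ period α ((z ^ u) x) := by
  obtain ⟨s, hs⟩ := (ht t).2 dvd_rfl
  obtain ⟨k, hk⟩ := ht.dvd_period h u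
  by_cases hpk : p ∣ k
  · exact Or.inr (hk ▸ dvd_mul_of_dvd_right hpk t)
  have hfix : (α ^ (t * k)) ((z ^ u) x) = (z ^ u) x := by
    rw [← hk]
    exact pow_apply_eq_self_iff_period_dvd_s15.2 dvd_rfl
  rw [pow_mul_apply_zpow_apply_eq_self_iff h hs, hq, Nat.cast_pow] at hfix
  rw [ht.period_eq_iff h, pow_apply_zpow_apply_eq_self_iff_s15 h hs, hq, Nat.cast_pow]
  exact Or.inl ((isCoprime_pow_geom_sum_of_dvd_sub_one (Nat.prime_iff_prime_int.1 hp) hpE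
    (mt Int.natCast_dvd_natCast.1 hpk)).dvd_of_dvd_mul_left hfix)

theorem period_dvd_pow_sub_one_of_forall_period_eq (h : SemiconjBy α z (z ^ e))
    (ht : IsReturnTime α z x t) (hall : ∀ u : ℤ, period α ((z ^ u) x) = t) :
    (period z x : ℤ) ∣ e ^ t - 1 := by
  obtain ⟨s, hs⟩ := (ht t).2 dvd_rfl
  simp only [ht.period_eq_iff h, pow_apply_zpow_apply_eq_self_iff_s15 h hs] at hall
  simpa using dvd_sub (hall 1) (hall 0)

variable [Fintype X] [DecidableEq X]

theorem period_le_count_cycleType (h : SemiconjBy α z (z ^ e)) (ht : IsReturnTime α z x t)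
    (ht1 : t ≠ 1) (hall : ∀ u : ℤ, period α ((z ^ u) x) = t) :
    period z x ≤ α.cycleType.count t := by
  have hinj : Set.InjOn (fun u : ℕ => (z ^ (u : ℤ)) x) (range (period z x)) := by
    intro u hu v hv huv
    exact ((Nat.modEq_iff_dvd.2 (zpow_apply_eq_zpow_apply_iff_s15.1 huv)).eq_of_lt_of_lt
      (mem_range.1 hv) (mem_range.1 hu)).symm
  calc period z x = #((range (period z x)).image fun u : ℕ => (z ^ (u : ℤ)) x) := by
        rw [card_image_of_injOn hinj, card_range]
    _ ≤ _ := by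
      refine card_le_count_cycleType ht1 (fun P hP => ?_) (fun P hP Q hQ hPQ hPQc => ?_)
      · obtain ⟨u, -, rfl⟩ := mem_image.1 hP
        exact hall u
      · obtain ⟨u, -, rfl⟩ := mem_image.1 hP
        obtain ⟨v, -, rfl⟩ := mem_image.1 hQ
        obtain ⟨i, -, hi⟩ := hPQc.exists_pow_eq'
        have hfix := pow_apply_eq_self_iff_period_dvd_s15.2 (hall u ▸ ht.dvd_of_pow_apply_eq h hi)
        exact hPQ (hfix.symm.trans hi)

theorem not_isCoprime_period (hfix : α.support = univ)
    (hcop : ∀ a ∈ α.cycleType, ∀ b ∈ α.cycleType, a ≠ b → Nat.gcd a b = 1)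
    (h : SemiconjBy α z (z ^ e)) (ht : IsReturnTime α z x t) (hq : period z x ≠ 1) :
    ¬ IsCoprime (period z x : ℤ) (e ^ t - 1) := by
  intro hE
  obtain ⟨⟨u₀, hu₀⟩, u₁, hu₁⟩ := ht.exists_period_eq_and_exists_period_ne h hq hE
  have hmem : ∀ u : ℤ, period α ((z ^ u) x) ∈ α.cycleType :=
    fun u => period_mem_cycleType_s15 (hfix ▸ mem_univ _)
  have hg := hcop _ (hmem u₁) _ (hmem u₀) (by rwa [hu₀])
  rw [hu₀] at hg
  have ht1 : t = 1 := Nat.dvd_one.1 (hg ▸ Nat.dvd_gcd (ht.dvd_period h u₁) dvd_rfl)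
  exact (one_lt_of_mem_cycleType (hmem u₀)).ne' (hu₀.trans ht1)

theorem period_dvd_sub_one (hfix : α.support = univ)
    (hgcd : ∀ a ∈ α.cycleType, Int.gcd (a : ℤ) (e ^ a - 1) = 1)
    (hmult : ∀ a ∈ α.cycleType, ∀ p : ℕ, p.Prime →
      ((p : ℤ) ∣ e ^ orderOf α - 1) → ¬ ((p : ℤ) ∣ e - 1) → α.cycleType.count a ≤ p - 1)
    (h : SemiconjBy α z (z ^ e)) (ht : IsReturnTime α z x t) {p j : ℕ} (hp : p.Prime)
    (hq : period z x = p ^ j) (hpE : (p : ℤ) ∣ e ^ t - 1) :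
    (period z x : ℤ) ∣ e - 1 := by
  have hmem : ∀ u : ℤ, period α ((z ^ u) x) ∈ α.cycleType :=
    fun u => period_mem_cycleType_s15 (hfix ▸ mem_univ _)
  have hpE' : ∀ {a : ℕ}, t ∣ a → (p : ℤ) ∣ e ^ a - 1 := by
    rintro _ ⟨k, rfl⟩
    exact hpE.trans (pow_one_sub_dvd_pow_mul_sub_one e t k)
  have hcoprime : ∀ a ∈ α.cycleType, p ∣ a → ¬ (p : ℤ) ∣ e ^ a - 1 := fun a ha hpa hpea =>
    hp.not_dvd_one (by simpa [hgcd a ha] using Int.dvd_gcd (Int.natCast_dvd_natCast.2 hpa) hpea)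
  by_cases hall : ∀ u : ℤ, period α ((z ^ u) x) = t
  swap
  · obtain ⟨u, hu⟩ := not_forall.1 hall
    have hpu := (ht.period_eq_or_dvd_period h hp hq hpE u).resolve_left hu
    exact absurd (hpE' (ht.dvd_period h u)) (hcoprime _ (hmem u) hpu)
  have htmem : t ∈ α.cycleType := hall 0 ▸ hmem 0
  by_cases hpe : (p : ℤ) ∣ e - 1
  · have hqE := ht.period_dvd_pow_sub_one_of_forall_period_eq h hall
    rw [hq, Nat.cast_pow] at hqE ⊢
    exact prime_pow_dvd_sub_one_of_dvd_pow_sub_one (Nat.prime_iff_prime_int.1 hp) hqE hpe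
      fun hpt => hcoprime t htmem (Int.natCast_dvd_natCast.1 hpt) hpE
  · obtain _ | j := j
    · simp [hq]
    have hcount := hq ▸ ht.period_le_count_cycleType h (one_lt_of_mem_cycleType htmem).ne' hall
    have hbound := hmult t htmem p hp (hpE' (dvd_of_mem_cycleType htmem)) hpe
    have hpq := Nat.le_self_pow (Nat.add_one_ne_zero j) p
    have := hp.one_lt
    omega

end IsReturnTime

end ReturnTime

variable [Fintype X] [DecidableEq X] {α : Perm X} {e : ℤ}

theorem prime_pow_dvd_sub_one_of_semiconjBy (hfix : α.support = univ)
    (hcop : ∀ a ∈ α.cycleType, ∀ b ∈ α.cycleType, a ≠ b → Nat.gcd a b = 1)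
    (hgcd : ∀ a ∈ α.cycleType, Int.gcd (a : ℤ) (e ^ a - 1) = 1)
    (hmult : ∀ a ∈ α.cycleType, ∀ p : ℕ, p.Prime →
      ((p : ℤ) ∣ e ^ orderOf α - 1) → ¬ ((p : ℤ) ∣ e - 1) → α.cycleType.count a ≤ p - 1)
    {z : Perm X} (h : SemiconjBy α z (z ^ e)) {p j : ℕ} (hp : p.Prime)
    (hz : orderOf z = p ^ j) : (p : ℤ) ^ j ∣ e - 1 := by
  obtain _ | j := j
  · simp
  obtain ⟨x, hx⟩ := exists_period_eq_of_orderOf_eq_prime_pow hp hz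
  obtain ⟨t, ht⟩ := exists_isReturnTime h x
  rw [← Nat.cast_pow, ← hx]
  by_cases hpE : (p : ℤ) ∣ e ^ t - 1
  · exact ht.period_dvd_sub_one hfix hgcd hmult h hp hx hpE
  · refine absurd ?_ (ht.not_isCoprime_period hfix hcop h ?_)
    · rw [hx, Nat.cast_pow]
      exact ((Nat.prime_iff_prime_int.1 hp).coprime_iff_not_dvd.2 hpE).pow_left
    · rw [hx]
      exact (Nat.one_lt_pow (Nat.succ_ne_zero j) hp.one_lt).ne'

theorem orderOf_dvd_sub_one_of_semiconjBy (hfix : α.support = univ)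
    (hcop : ∀ a ∈ α.cycleType, ∀ b ∈ α.cycleType, a ≠ b → Nat.gcd a b = 1)
    (hgcd : ∀ a ∈ α.cycleType, Int.gcd (a : ℤ) (e ^ a - 1) = 1)
    (hmult : ∀ a ∈ α.cycleType, ∀ p : ℕ, p.Prime →
      ((p : ℤ) ∣ e ^ orderOf α - 1) → ¬ ((p : ℤ) ∣ e - 1) → α.cycleType.count a ≤ p - 1)
    {y : Perm X} (h : SemiconjBy α y (y ^ e)) : (orderOf y : ℤ) ∣ e - 1 := by
  rw [Int.natCast_dvd, Nat.dvd_iff_prime_pow_dvd_dvd]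
  intro p k hp hpk
  have hz : orderOf (y ^ (orderOf y / p ^ k)) = p ^ k :=
    orderOf_pow_orderOf_div (orderOf_pos y).ne' hpk
  have hsemi : SemiconjBy α (y ^ (orderOf y / p ^ k)) ((y ^ (orderOf y / p ^ k)) ^ e) := by
    simpa [← zpow_natCast, ← zpow_mul, mul_comm] using h.pow_right (orderOf y / p ^ k)
  exact Int.natCast_dvd.1
    (mod_cast prime_pow_dvd_sub_one_of_semiconjBy hfix hcop hgcd hmult hsemi hp hz)

end Equiv.Perm

theorem stmt_15_general (n : ℕ) (e : ℤ)
    (α : Equiv.Perm (Fin n)) (hfix : α.support = Finset.univ)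
    (w : ℕ) (hw : w = orderOf α)
    (hcop : ∀ a ∈ α.cycleType, ∀ b ∈ α.cycleType, a ≠ b → Nat.gcd a b = 1)
    (hgcd : ∀ a ∈ α.cycleType, Int.gcd (a : ℤ) (e ^ a - 1) = 1)
    (hmult : ∀ a ∈ α.cycleType, ∀ p : ℕ, p.Prime →
      ((p : ℤ) ∣ e ^ w - 1) → ¬ ((p : ℤ) ∣ e - 1) →
      α.cycleType.count a ≤ p - 1) :
    ∀ y : Equiv.Perm (Fin n),
      α * y * α⁻¹ = y ^ e ↔ (y ^ (e - 1) = 1 ∧ α * y = y * α) := by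
  subst hw
  intro y
  have hye : y ^ (e - 1) = 1 → y ^ e = y := fun h1 => by
    rw [← sub_add_cancel e 1, zpow_add_one, h1, one_mul]
  constructor
  · intro hy
    have h : SemiconjBy α y (y ^ e) := by rw [SemiconjBy, ← hy, inv_mul_cancel_right]
    have h1 : y ^ (e - 1) = 1 := orderOf_dvd_iff_zpow_eq_one.1
      (Equiv.Perm.orderOf_dvd_sub_one_of_semiconjBy hfix hcop hgcd hmult h)
    exact ⟨h1, by rw [h.eq, hye h1]⟩
  · rintro ⟨h1, h2⟩
    rw [hye h1, h2, mul_inv_cancel_right]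

/-- Theorem 2.14: let `α ∈ Sₙ` have no fixed points and order `w`, with
pairwise coprime distinct cycle lengths. Assume every cycle length `a` of `α` satisfies
`gcd(a, e ^ a - 1) = 1` and that the number of cycles of length `a` is at most `p - 1`
for every prime `p` dividing `e ^ w - 1` but not `e - 1`. Then `y` solves `(e*α)` iff
`y ^ (e - 1) = 1` and `y` commutes with `α`. -/
theorem stmt_15 (n : ℕ) (e : ℤ) (he : e ∉ ({-1, 0, 1} : Set ℤ))
    (α : Equiv.Perm (Fin n)) (hfix : α.support = Finset.univ)
    (w : ℕ) (hw : w = orderOf α)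
    (hcop : ∀ a ∈ α.cycleType, ∀ b ∈ α.cycleType, a ≠ b → Nat.gcd a b = 1)
    (hgcd : ∀ a ∈ α.cycleType, Int.gcd (a : ℤ) (e ^ a - 1) = 1)
    (hmult : ∀ a ∈ α.cycleType, ∀ p : ℕ, p.Prime →
      ((p : ℤ) ∣ e ^ w - 1) → ¬ ((p : ℤ) ∣ e - 1) →
      α.cycleType.count a ≤ p - 1) :
    ∀ y : Equiv.Perm (Fin n),
      α * y * α⁻¹ = y ^ e ↔ (y ^ (e - 1) = 1 ∧ α * y = y * α) :=
  stmt_15_general n e α hfix w hw hcop hgcd hmult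
end

section
/- Let α₁, α₂ ∈ Sₙ. The equation α₁ ∘ x ∘ α₂ ∘ x = 1 has a solution x ∈ Sₙ if and only if for every integer i ≥ 1 the number of cycles of length 2i in α₁⁻¹ ∘ α₂ is even (equivalently, if and only if α₁⁻¹ ∘ α₂ has a square root in Sₙ: there exists z ∈ Sₙ with z² = α₁⁻¹ ∘ α₂, namely z = x ∘ α₂). -/
/-!
With `z = x * α₂` the equation becomes `z ^ 2 = α₁⁻¹ * α₂`. The square of an `ℓ`-cycle is an
`ℓ`-cycle when `ℓ` is odd and splits into two `ℓ / 2`-cycles when `ℓ` is even, so the cycles of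
even length of a square come in pairs. Conversely, if the even-length cycles of `π` pair up,
merge each pair into one cycle of twice the length and keep the odd cycles: a permutation of the
resulting cycle type squares to a conjugate of `π`, and conjugating it back gives a square root
of `π`.
-/

open Finset

namespace Equiv.Perm

variable {α : Type*} [DecidableEq α] [Fintype α]

theorem orderOf_cycleOf_dvd_iff (f : Perm α) (x : α) (k : ℕ) :
    orderOf (f.cycleOf x) ∣ k ↔ (f ^ k) x = x := by
  by_cases hx : f x = x
  · simp [(cycleOf_eq_one_iff f).mpr hx, pow_apply_eq_self_of_apply_eq_self hx]
  · rw [orderOf_dvd_iff_pow_eq_one,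
      (isCycle_cycleOf f hx).pow_eq_one_iff' (x := x) (by rwa [cycleOf_apply_self]),
      cycleOf_pow_apply_self]

theorem IsCycle.orderOf_cycleOf_pow {c : Perm α} (hc : c.IsCycle) {x : α} (hx : c x ≠ x)
    (k : ℕ) : orderOf ((c ^ k).cycleOf x) = orderOf (c ^ k) :=
  Nat.dvd_right_iff_eq.mp fun j => by
    rw [orderOf_cycleOf_dvd_iff, orderOf_dvd_iff_pow_eq_one, ← pow_mul, hc.pow_eq_one_iff' hx]

theorem IsCycle.cycleType_pow_eq_replicate {c : Perm α} (hc : c.IsCycle) (k : ℕ) :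
    (c ^ k).cycleType =
      Multiset.replicate (Multiset.card (c ^ k).cycleType) (orderOf (c ^ k)) := by
  refine Multiset.eq_replicate_card.mpr fun a ha => ?_
  obtain ⟨d, hd, rfl⟩ := Multiset.mem_map.mp ha
  have hd_cycle := (mem_cycleFactorsFinset_iff.mp hd).1
  obtain ⟨y, hy⟩ := hd_cycle.nonempty_support
  have hcy : c y ≠ y := fun h => mem_support.mp (mem_cycleFactorsFinset_support_le hd hy)
    (pow_apply_eq_self_of_apply_eq_self h k)
  rw [Function.comp_apply, ← hd_cycle.orderOf, cycle_is_cycleOf hy hd, hc.orderOf_cycleOf_pow hcy]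

theorem IsCycle.cycleType_pow {c : Perm α} (hc : c.IsCycle) {k : ℕ} (hk : ¬#c.support ∣ k) :
    (c ^ k).cycleType =
      Multiset.replicate ((#c.support).gcd k) (#c.support / (#c.support).gcd k) := by
  set ℓ := #c.support
  have hk0 : k ≠ 0 := by rintro rfl; exact hk (dvd_zero ℓ)
  have hℓ : 0 < ℓ := by have := hc.two_le_card_support; omega
  have hord : orderOf (c ^ k) = ℓ / ℓ.gcd k := by rw [orderOf_pow' c hk0, hc.orderOf]
  have hrep := hc.cycleType_pow_eq_replicate k
  rw [hord] at hrep
  have hcard :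
      Multiset.card (c ^ k).cycleType * (ℓ / ℓ.gcd k) = ℓ.gcd k * (ℓ / ℓ.gcd k) := by
    rw [Nat.mul_div_cancel' (Nat.gcd_dvd_left ℓ k), ← smul_eq_mul, ← Multiset.sum_replicate,
      ← hrep, sum_cycleType, hc.support_pow_eq_iff.mpr (hc.orderOf ▸ hk)]
  rw [hrep, Nat.eq_of_mul_eq_mul_right
    (Nat.div_pos (Nat.gcd_le_left k hℓ) (Nat.gcd_pos_of_pos_left k hℓ)) hcard]

def sqCycleType (ℓ : ℕ) : Multiset ℕ :=
  if ℓ = 2 then 0 else if Even ℓ then {ℓ / 2, ℓ / 2} else {ℓ}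

theorem IsCycle.cycleType_sq {c : Perm α} (hc : c.IsCycle) :
    (c ^ 2).cycleType = sqCycleType #c.support := by
  unfold sqCycleType
  by_cases h2 : #c.support = 2
  · rw [if_pos h2, ← h2, ← hc.orderOf, pow_orderOf_eq_one, cycleType_one]
  have hndvd : ¬#c.support ∣ 2 := fun h =>
    h2 (Nat.le_antisymm (Nat.le_of_dvd two_pos h) hc.two_le_card_support)
  rw [if_neg h2, hc.cycleType_pow hndvd]
  split_ifs with heven
  · rw [Nat.gcd_eq_right (even_iff_two_dvd.mp heven)]
    rfl
  · rw [(Nat.coprime_two_right.mpr (Nat.not_even_iff_odd.mp heven)).gcd_eq_one, Nat.div_one]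
    rfl

theorem cycleType_sq (z : Perm α) : (z ^ 2).cycleType = z.cycleType.bind sqCycleType := by
  induction z using cycle_induction_on with
  | base_one => simp
  | base_cycles c hc => rw [hc.cycleType, hc.cycleType_sq, Multiset.singleton_bind]
  | induction_disjoint σ τ hd _ ihσ ihτ =>
    rw [hd.commute.mul_pow, (hd.pow_disjoint_pow 2 2).cycleType_mul, hd.cycleType_mul,
      Multiset.add_bind, ihσ, ihτ]

theorem even_count_sqCycleType (ℓ i : ℕ) : Even ((sqCycleType ℓ).count (2 * i)) := by
  unfold sqCycleType
  split_ifs with h2 heven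
  · simp
  · rw [Multiset.insert_eq_cons, Multiset.count_cons, Multiset.count_singleton]
    split_ifs <;> simp
  · rw [Multiset.count_singleton, if_neg (by rintro rfl; simp at heven)]
    exact Even.zero

theorem exists_bind_sqCycleType_eq {s : Multiset ℕ} (hs : ∀ a ∈ s, 2 ≤ a)
    (heven : ∀ i, 1 ≤ i → Even (s.count (2 * i))) :
    ∃ M : Multiset ℕ, M.bind sqCycleType = s ∧ M.sum = s.sum ∧ ∀ a ∈ M, 2 ≤ a := by
  obtain ⟨D, hD⟩ : ∃ D, s.filter Even = 2 • D := by
    refine Multiset.exists_smul_of_dvd_count _ fun a ha => ?_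
    obtain ⟨has, i, rfl⟩ := Multiset.mem_filter.mp ha
    rw [Multiset.count_filter_of_pos ⟨i, rfl⟩, ← two_mul]
    exact (heven i (by have := hs _ has; omega)).two_dvd
  have hD2 : ∀ x ∈ D, 2 ≤ x := fun x hx =>
    hs x (Multiset.mem_of_mem_filter (hD ▸ Multiset.mem_nsmul_of_ne_zero two_ne_zero |>.mpr hx))
  -- Keep the odd lengths and merge each pair `x, x` of equal even lengths into one `2 * x`.
  refine ⟨s.filter (¬Even ·) + D.map (2 * ·), ?_, ?_, ?_⟩
  · have hodd : (s.filter (¬Even ·)).bind sqCycleType = s.filter (¬Even ·) := by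
      rw [Multiset.bind_congr fun a ha => ?_, Multiset.bind_singleton, Multiset.map_id']
      have ha := (Multiset.mem_filter.mp ha).2
      rw [sqCycleType, if_neg (by rintro rfl; exact ha even_two), if_neg ha]
    have hdouble : (D.map (2 * ·)).bind sqCycleType = 2 • D := by
      rw [Multiset.bind_map, Multiset.bind_congr fun x hx => ?_, Multiset.bind_add,
        Multiset.bind_singleton, Multiset.map_id', two_nsmul]
      have := hD2 x hx
      rw [sqCycleType, if_neg (by omega), if_pos (even_two_mul x),
        Nat.mul_div_cancel_left x two_pos]
      rfl
    rw [Multiset.add_bind, hodd, hdouble, ← hD, add_comm, Multiset.filter_add_not]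
  · rw [Multiset.sum_add, Multiset.sum_map_mul_left, Multiset.map_id', ← smul_eq_mul,
      ← Multiset.sum_nsmul, ← hD, add_comm, ← Multiset.sum_add, Multiset.filter_add_not]
  · rintro a ha
    rcases Multiset.mem_add.mp ha with ha | ha
    · exact hs a (Multiset.mem_of_mem_filter ha)
    · obtain ⟨x, hx, rfl⟩ := Multiset.mem_map.mp ha
      have := hD2 x hx
      omega

theorem exists_sq_eq_iff_even_count_cycleType (π : Perm α) :
    (∃ z : Perm α, z ^ 2 = π) ↔ ∀ i, 1 ≤ i → Even (π.cycleType.count (2 * i)) := by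
  constructor
  · rintro ⟨z, rfl⟩ i -
    rw [cycleType_sq, Multiset.count_bind, even_iff_two_dvd]
    exact Multiset.dvd_sum fun _ h => by
      obtain ⟨ℓ, -, rfl⟩ := Multiset.mem_map.mp h
      exact (even_count_sqCycleType ℓ i).two_dvd
  · intro heven
    obtain ⟨M, hM, hsum, hM2⟩ :=
      exists_bind_sqCycleType_eq (fun _ => two_le_of_mem_cycleType) heven
    obtain ⟨w, hw⟩ := (exists_with_cycleType_iff α).mpr ⟨hsum ▸ sum_cycleType_le π, hM2⟩
    have hconj : IsConj (w ^ 2) π := isConj_of_cycleType_eq (by rw [cycleType_sq, hw, hM])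
    obtain ⟨g, hg⟩ := isConj_iff.mp hconj
    exact ⟨g * w * g⁻¹, by rw [conj_pow, hg]⟩

end Equiv.Perm

theorem exists_mul_mul_mul_eq_one_iff_exists_sq_eq {G : Type*} [Group G] (a b : G) :
    (∃ x, a * x * b * x = 1) ↔ ∃ z, z ^ 2 = a⁻¹ * b := by
  constructor
  · rintro ⟨x, hx⟩
    refine ⟨x * b, ?_⟩
    calc (x * b) ^ 2 = a⁻¹ * (a * x * b * x) * b := by rw [sq]; group
      _ = a⁻¹ * b := by rw [hx, mul_one]
  · rintro ⟨z, hz⟩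
    refine ⟨z * b⁻¹, ?_⟩
    calc a * (z * b⁻¹) * b * (z * b⁻¹) = a * z ^ 2 * b⁻¹ := by rw [sq]; group
      _ = 1 := by rw [hz]; group

/-- the quadratic equation `α₁ ∘ x ∘ α₂ ∘ x = 1` has a solution in `Sₙ`
iff for every `i ≥ 1` the number of cycles of length `2i` in `α₁⁻¹ ∘ α₂` is even,
equivalently iff `α₁⁻¹ ∘ α₂` has a square root in `Sₙ`. -/
theorem stmt_18 (n : ℕ) (α₁ α₂ : Equiv.Perm (Fin n)) :
    ((∃ x : Equiv.Perm (Fin n), α₁ * x * α₂ * x = 1) ↔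
      ∀ i : ℕ, 1 ≤ i → Even ((α₁⁻¹ * α₂).cycleType.count (2 * i))) ∧
    ((∃ x : Equiv.Perm (Fin n), α₁ * x * α₂ * x = 1) ↔
      ∃ z : Equiv.Perm (Fin n), z ^ 2 = α₁⁻¹ * α₂) := by
  have h := exists_mul_mul_mul_eq_one_iff_exists_sq_eq α₁ α₂
  exact ⟨h.trans (Equiv.Perm.exists_sq_eq_iff_even_count_cycleType _), h⟩
end
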